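/- arXiv:0707.3467 — 4 statements merged into one kernel-verified Lean document; each statement's English description precedes it below -/
import Mathlib

section
/- Let n ≥ 1 and let ρ : ℝ × ℝⁿ → ℝ (ρ ≥ 0) and v : ℝ × ℝⁿ → ℝⁿ be C¹ functions satisfying pointwise the continuity equation ∂_t ρ + div_x(ρv) = 0. Let φ : ℝⁿ → ℝ be a C¹ radial function, φ(x) = ψ(|x|). Assume that for each t the functions x ↦ ρ(t,x)φ(x) and x ↦ ρ(t,x)(ψ'(|x|)/|x|)(v(t,x)·x) are integrable, that on each compact time interval |∂_t(ρφ)| is dominated by a fixed integrable function of x, and that there are R₀ > 0, ε > 0 and a continuous function C(t) with ρ(t,x)|v(t,x)||∇φ(x)| ≤ C(t)|x|^{−n+1−ε} and ρ(t,x)|v(t,x)||φ(x)| ≤ C(t)|x|^{−n+1−ε} for |x| > R₀. Then G_φ(t) := ∫_{ℝⁿ} ρ(t,x) φ(x) dx is differentiable in t and G_φ'(t) = ∫_{ℝⁿ} (ψ'(|x|)/|x|) (v(t,x)·x) ρ(t,x) dx. -/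
/-!
Differentiating under the integral sign gives `G_φ' = ∫ φ ∂ₜρ`. By the continuity equation and
the product rule, `φ ∂ₜρ = -div(φ ρ v) + ρ v · ∇φ`, and for radial `φ` the last term is
`(ψ'(|x|)/|x|) (v·x) ρ`. The divergence term integrates to zero: by the divergence theorem its
integral over the cube `[-R, R]ⁿ` is a flux through a boundary of area `O(Rⁿ⁻¹)`, on which
`|φ ρ v| = O(R^{1-n-ε})`, so it is `O(R^{-ε})`, and the cubes exhaust `ℝⁿ`.
-/

open MeasureTheory Real Filter Set Topology
open scoped RealInnerProductSpace

/-- Time partial derivative `∂_t f` of a function on `ℝ × ℝⁿ`. -/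
noncomputable def pdT {n : ℕ} (f : ℝ × EuclideanSpace ℝ (Fin n) → ℝ) :
    ℝ × EuclideanSpace ℝ (Fin n) → ℝ :=
  fun q => deriv (fun s => f (s, q.2)) q.1

/-- Spatial partial derivative `∂_{x_i} f` of a function on `ℝ × ℝⁿ`. -/
noncomputable def pdX {n : ℕ} (f : ℝ × EuclideanSpace ℝ (Fin n) → ℝ) (i : Fin n) :
    ℝ × EuclideanSpace ℝ (Fin n) → ℝ :=
  fun q => fderiv ℝ (fun y => f (q.1, y)) q.2 (EuclideanSpace.single i 1)

/-- Spatial divergence of a (time-dependent) vector field on `ℝ × ℝⁿ`. -/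
noncomputable def divX {n : ℕ} (w : ℝ × EuclideanSpace ℝ (Fin n) → EuclideanSpace ℝ (Fin n)) :
    ℝ × EuclideanSpace ℝ (Fin n) → ℝ :=
  fun q => ∑ i, pdX (fun z => w z i) i q

section Cube
variable {m : ℕ} {f : (Fin (m + 1) → ℝ) → Fin (m + 1) → ℝ}
  {f' : (Fin (m + 1) → ℝ) → (Fin (m + 1) → ℝ) →L[ℝ] Fin (m + 1) → ℝ}

lemma norm_integral_cube_divergence_le (hf' : ∀ y, HasFDerivAt f (f' y) y)
    (hint : Integrable fun y => ∑ i, f' y (Pi.single i 1) i) {R B : ℝ} (hR : 0 ≤ R)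
    (hB : ∀ y, R ≤ ‖y‖ → ‖f y‖ ≤ B) :
    ‖∫ y in Icc (fun _ => -R) (fun _ => R), ∑ i, f' y (Pi.single i 1) i‖ ≤
      2 * (m + 1) * (2 * R) ^ m * B := by
  have hface : ∀ i c, |c| = R →
      ‖∫ x in Icc (fun _ : Fin m => -R) (fun _ => R), f (i.insertNth c x) i‖ ≤ (2 * R) ^ m * B := by
    intro i c hc
    have hle : (fun _ : Fin m => -R) ≤ fun _ => R := fun _ => by linarith
    have hvol : volume.real (Icc (fun _ : Fin m => -R) (fun _ => R)) = (2 * R) ^ m := by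
      simp [measureReal_def, Real.volume_Icc_pi_toReal hle, two_mul]
    rw [← hvol, mul_comm]
    refine norm_setIntegral_le_of_norm_le_const (by simp [Real.volume_Icc_pi]) fun x _ => ?_
    refine (norm_le_pi_norm _ i).trans (hB _ ?_)
    calc R = ‖(i.insertNth c x : Fin (m + 1) → ℝ) i‖ := by simp [hc]
      _ ≤ ‖(i.insertNth c x : Fin (m + 1) → ℝ)‖ := norm_le_pi_norm _ i
  have hle : (fun _ : Fin (m + 1) => -R) ≤ fun _ => R := fun _ => by linarith
  rw [integral_divergence_of_hasFDerivAt_off_countable _ _ hle f f' ∅ countable_empty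
    (continuous_iff_continuousAt.2 fun y => (hf' y).continuousAt).continuousOn
    (fun y _ => hf' y) hint.integrableOn]
  calc _ ≤ ∑ _ : Fin (m + 1), ((2 * R) ^ m * B + (2 * R) ^ m * B) := by
        refine (norm_sum_le _ _).trans (Finset.sum_le_sum fun i _ => (norm_sub_le _ _).trans ?_)
        exact add_le_add (hface i R (abs_of_nonneg hR)) (hface i (-R) (by simp [abs_of_nonneg hR]))
    _ = _ := by
      simp only [Finset.sum_const, Finset.card_univ, Fintype.card_fin, nsmul_eq_mul]
      push_cast
      ring

lemma integral_divergence_pi_eq_zero_of_norm_le_rpow (hf' : ∀ y, HasFDerivAt f (f' y) y)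
    (hint : Integrable fun y => ∑ i, f' y (Pi.single i 1) i) {R₀ ε K : ℝ} (hε : 0 < ε)
    (hK : 0 ≤ K) (hdecay : ∀ y, R₀ < ‖y‖ → ‖f y‖ ≤ K * ‖y‖ ^ (-(m : ℝ) - ε)) :
    ∫ y, ∑ i, f' y (Pi.single i 1) i = 0 := by
  have hcubes : Tendsto (fun R : ℝ => fun _ : Fin (m + 1) => R) atTop atTop := by
    refine tendsto_atTop.2 fun b => (eventually_ge_atTop ‖b‖).mono fun R hR i => ?_
    exact (le_abs_self (b i)).trans ((norm_le_pi_norm b i).trans hR)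
  have hexhaust := (aecover_Icc (μ := volume) (tendsto_neg_atTop_atBot.comp hcubes) hcubes
    ).integral_tendsto_of_countably_generated hint
  refine tendsto_nhds_unique hexhaust (squeeze_zero_norm' (a := fun R =>
    2 ^ (m + 1) * (m + 1) * K * R ^ (-ε)) ?_ ?_)
  · filter_upwards [eventually_gt_atTop (max R₀ 0)] with R hR
    have hR₀ : R₀ < R := (le_max_left _ _).trans_lt hR
    have hR0 : 0 < R := (le_max_right _ _).trans_lt hR
    have hbound := norm_integral_cube_divergence_le hf' hint hR0.le (B := K * R ^ (-(m : ℝ) - ε))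
      fun y hy => (hdecay y (hR₀.trans_le hy)).trans <| mul_le_mul_of_nonneg_left
        (rpow_le_rpow_of_nonpos hR0 hy (by linarith [(Nat.cast_nonneg m : (0 : ℝ) ≤ m)])) hK
    have hpow : R ^ m * R ^ (-(m : ℝ) - ε) = R ^ (-ε) := by
      rw [← rpow_natCast, ← rpow_add hR0]
      ring_nf
    calc _ ≤ _ := hbound
      _ = 2 ^ (m + 1) * (m + 1) * K * (R ^ m * R ^ (-(m : ℝ) - ε)) := by ring
      _ = _ := by rw [hpow]
  · simpa using (tendsto_rpow_neg_atTop hε).const_mul (2 ^ (m + 1) * (m + 1) * K)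

end Cube

noncomputable def divergence {n : ℕ} (w : EuclideanSpace ℝ (Fin n) → EuclideanSpace ℝ (Fin n))
    (x : EuclideanSpace ℝ (Fin n)) : ℝ :=
  ∑ i, fderiv ℝ w x (EuclideanSpace.single i 1) i

section Divergence
variable {n : ℕ}

lemma divX_eq_divergence (w : ℝ × EuclideanSpace ℝ (Fin n) → EuclideanSpace ℝ (Fin n))
    (q : ℝ × EuclideanSpace ℝ (Fin n)) (hw : DifferentiableAt ℝ (fun y => w (q.1, y)) q.2) :
    divX w q = divergence (fun y => w (q.1, y)) q.2 := by
  refine Finset.sum_congr rfl fun i _ => ?_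
  exact congr($(((EuclideanSpace.proj i).hasFDerivAt.comp q.2 hw.hasFDerivAt).fderiv)
    (EuclideanSpace.single i 1))

lemma divergence_smul {φ : EuclideanSpace ℝ (Fin n) → ℝ}
    {u : EuclideanSpace ℝ (Fin n) → EuclideanSpace ℝ (Fin n)} {x : EuclideanSpace ℝ (Fin n)}
    (hφ : DifferentiableAt ℝ φ x) (hu : DifferentiableAt ℝ u x) :
    divergence (fun y => φ y • u y) x = φ x * divergence u x + fderiv ℝ φ x (u x) := by
  have hgrad : fderiv ℝ φ x (u x) = ∑ i, fderiv ℝ φ x (EuclideanSpace.single i 1) * u x i := by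
    conv_lhs => rw [← (EuclideanSpace.basisFun (Fin n) ℝ).sum_repr (u x)]
    simp [mul_comm]
  have hderiv : HasFDerivAt (fun y => φ y • u y) _ x := hφ.hasFDerivAt.smul hu.hasFDerivAt
  rw [divergence, hderiv.fderiv, hgrad, divergence,
    Finset.mul_sum, ← Finset.sum_add_distrib]
  simp [ContinuousLinearMap.smulRight_apply]

lemma EuclideanSpace.norm_ofLp_le {ι : Type*} [Fintype ι] (x : EuclideanSpace ℝ ι) :
    ‖WithLp.ofLp x‖ ≤ ‖x‖ :=
  pi_norm_le_iff_of_nonneg (norm_nonneg x) |>.2 (PiLp.norm_apply_le x)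

lemma integral_divergence_eq_zero_of_norm_le_rpow
    {w : EuclideanSpace ℝ (Fin n) → EuclideanSpace ℝ (Fin n)} (hw : Differentiable ℝ w)
    (hint : Integrable (divergence w)) {R₀ ε K : ℝ} (hR₀ : 0 ≤ R₀) (hε : 0 < ε) (hK : 0 ≤ K)
    (hdecay : ∀ x, R₀ < ‖x‖ → ‖w x‖ ≤ K * ‖x‖ ^ (-(n : ℝ) + 1 - ε)) :
    ∫ x, divergence w x = 0 := by
  cases n with
  | zero => simp [divergence]
  | succ m =>
    let e := EuclideanSpace.equiv (Fin (m + 1)) ℝ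
    have hmp := (EuclideanSpace.volume_preserving_symm_measurableEquiv_toLp (Fin (m + 1))).symm
    rw [← hmp.integral_comp']
    refine integral_divergence_pi_eq_zero_of_norm_le_rpow (f := fun y => e (w (e.symm y)))
      (fun y => (e.hasFDerivAt.comp _ ((hw _).hasFDerivAt.comp _ e.symm.hasFDerivAt)))
      (hmp.integrable_comp_emb (MeasurableEquiv.measurableEmbedding _) |>.2 hint) (R₀ := R₀)
      hε hK ?_
    intro y hy
    have hy' : ‖y‖ ≤ ‖e.symm y‖ := EuclideanSpace.norm_ofLp_le (e.symm y)
    have hexp : -((m + 1 : ℕ) : ℝ) + 1 - ε ≤ 0 := by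
      push_cast
      linarith [(Nat.cast_nonneg m : (0 : ℝ) ≤ m)]
    calc ‖e (w (e.symm y))‖ ≤ ‖w (e.symm y)‖ := EuclideanSpace.norm_ofLp_le _
      _ ≤ K * ‖e.symm y‖ ^ (-((m + 1 : ℕ) : ℝ) + 1 - ε) := hdecay _ (hy.trans_le hy')
      _ ≤ K * ‖y‖ ^ (-((m + 1 : ℕ) : ℝ) + 1 - ε) :=
        mul_le_mul_of_nonneg_left (rpow_le_rpow_of_nonpos (hR₀.trans_lt hy) hy' hexp) hK
      _ = K * ‖y‖ ^ (-(m : ℝ) - ε) := by push_cast; ring_nf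

end Divergence

section Radial
variable {E : Type*} [NormedAddCommGroup E] [InnerProductSpace ℝ E]

lemma hasFDerivAt_norm_of_ne_zero {x : E} (hx : x ≠ 0) :
    HasFDerivAt (‖·‖) (‖x‖⁻¹ • innerSL ℝ x) x := by
  have hsqrt := (hasStrictFDerivAt_norm_sq x).hasFDerivAt.sqrt (by simpa using hx)
  simp only [sqrt_sq (norm_nonneg _)] at hsqrt
  convert hsqrt using 1
  ext ξ
  simp only [smul_apply, coe_innerSL_apply, smul_eq_mul, one_div, nsmul_eq_mul,
    Nat.cast_ofNat]
  field_simp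

variable {φ : E → ℝ} {ψ : ℝ → ℝ}

lemma fderiv_at_zero_of_radial (hφψ : ∀ x, φ x = ψ ‖x‖) : fderiv ℝ φ 0 = 0 := by
  by_cases hφ : DifferentiableAt ℝ φ 0
  · have hφ' : HasFDerivAt φ (fderiv ℝ φ 0) (-0) := by simpa using hφ.hasFDerivAt
    have hneg := hφ'.comp (0 : E) (hasFDerivAt_id (0 : E)).neg
    have heven : φ ∘ Neg.neg = φ := by ext; simp [hφψ]
    rw [heven] at hneg
    ext ξ
    have := congr($(hneg.unique hφ.hasFDerivAt) ξ)
    simp only [ContinuousLinearMap.comp_neg, neg_apply,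
      ContinuousLinearMap.comp_id] at this
    simp only [zero_apply]
    linarith
  · exact fderiv_zero_of_not_differentiableAt hφ

/-- At `x = 0` the right side is `0` because `a / 0 = 0`, and so is the left, as `φ` is even. -/
lemma fderiv_apply_of_radial (hφψ : ∀ x, φ x = ψ ‖x‖) {x : E} (hφ : DifferentiableAt ℝ φ x)
    (ξ : E) : fderiv ℝ φ x ξ = deriv ψ ‖x‖ / ‖x‖ * ⟪ξ, x⟫ := by
  rcases eq_or_ne x 0 with rfl | hx
  · simp [fderiv_at_zero_of_radial hφψ]
  have hr : 0 < ‖x‖ := norm_pos_iff.2 hx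
  set u := ‖x‖⁻¹ • x
  have hψ : ψ =ᶠ[𝓝 ‖x‖] fun s => φ (s • u) := by
    filter_upwards [Ioi_mem_nhds hr] with s hs
    simp [hφψ, u, norm_smul, hr.ne', abs_of_pos (mem_Ioi.1 hs)]
  have hslice : HasDerivAt (fun s => φ (s • u)) (fderiv ℝ φ x u) ‖x‖ := by
    have hxu : ‖x‖ • u = x := by simp [u, smul_smul, hr.ne']
    have hφx : HasFDerivAt φ (fderiv ℝ φ x) (‖x‖ • u) := by
      rw [hxu]; exact hφ.hasFDerivAt
    have := hφx.comp_hasDerivAt ‖x‖ ((hasDerivAt_id ‖x‖).smul_const u)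
    rw [one_smul] at this
    exact this
  have hψd : HasDerivAt ψ (deriv ψ ‖x‖) ‖x‖ :=
    (hslice.congr_of_eventuallyEq hψ).differentiableAt.hasDerivAt
  have hφd : HasFDerivAt φ (deriv ψ ‖x‖ • ‖x‖⁻¹ • innerSL ℝ x) x := by
    have hcomp : ψ ∘ (‖·‖) = φ := by ext; simp [hφψ]
    simpa [hcomp] using hψd.comp_hasFDerivAt x (hasFDerivAt_norm_of_ne_zero hx)
  rw [hφd.fderiv]
  simp only [smul_apply, coe_innerSL_apply, smul_eq_mul, real_inner_comm]
  ring

end Radial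

section TimeDerivative
variable {n : ℕ}

lemma hasDerivAt_pdT {f : ℝ × EuclideanSpace ℝ (Fin n) → ℝ} (hf : Differentiable ℝ f)
    (s : ℝ) (x : EuclideanSpace ℝ (Fin n)) :
    HasDerivAt (fun s => f (s, x)) (pdT f (s, x)) s :=
  ((hf _).comp s (differentiableAt_id.prodMk (differentiableAt_const x))).hasDerivAt

lemma pdT_eq_fderiv {f : ℝ × EuclideanSpace ℝ (Fin n) → ℝ} (hf : Differentiable ℝ f) :
    pdT f = fun q => fderiv ℝ f q (1, 0) := by
  ext ⟨s, x⟩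
  exact (((hf _).hasFDerivAt.comp_hasDerivAt s
    ((hasDerivAt_id s).prodMk (hasDerivAt_const s x))).deriv)

lemma continuous_pdT {f : ℝ × EuclideanSpace ℝ (Fin n) → ℝ} (hf : ContDiff ℝ 1 f) :
    Continuous (pdT f) := by
  rw [pdT_eq_fderiv (hf.differentiable one_ne_zero)]
  exact (hf.continuous_fderiv one_ne_zero).clm_apply continuous_const

lemma hasDerivAt_integral_of_pdT {f : ℝ × EuclideanSpace ℝ (Fin n) → ℝ} (hf : ContDiff ℝ 1 f)
    {t : ℝ} (hint : Integrable fun x => f (t, x)) {g : EuclideanSpace ℝ (Fin n) → ℝ}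
    (hg : Integrable g) (hbound : ∀ s ∈ Icc (t - 1) (t + 1), ∀ x, |pdT f (s, x)| ≤ g x) :
    Integrable (fun x => pdT f (t, x)) ∧
      HasDerivAt (fun s => ∫ x, f (s, x)) (∫ x, pdT f (t, x)) t := by
  have hslice (s : ℝ) : Continuous fun x : EuclideanSpace ℝ (Fin n) => (s, x) :=
    continuous_const.prodMk continuous_id
  refine hasDerivAt_integral_of_dominated_loc_of_deriv_le (Metric.ball_mem_nhds t one_pos)
    (.of_forall fun s => (hf.continuous.comp (hslice s)).aestronglyMeasurable) hint
    ((continuous_pdT hf).comp (hslice t)).aestronglyMeasurable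
    (.of_forall fun x s hs => ?_) hg
    (.of_forall fun x s _ => hasDerivAt_pdT (hf.differentiable one_ne_zero) s x)
  rw [Real.ball_eq_Ioo] at hs
  exact hbound s (Ioo_subset_Icc_self hs) x

lemma pdT_mul_radial_eq_sub_divergence {ρ : ℝ × EuclideanSpace ℝ (Fin n) → ℝ}
    {v : ℝ × EuclideanSpace ℝ (Fin n) → EuclideanSpace ℝ (Fin n)} (hρ : Differentiable ℝ ρ)
    (hv : Differentiable ℝ v) {φ : EuclideanSpace ℝ (Fin n) → ℝ} {ψ : ℝ → ℝ}
    (hφ : Differentiable ℝ φ) (hφψ : ∀ x, φ x = ψ ‖x‖) {t : ℝ} {x : EuclideanSpace ℝ (Fin n)}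
    (hcont : pdT ρ (t, x) + divX (fun z => ρ z • v z) (t, x) = 0) :
    pdT (fun z => ρ z * φ z.2) (t, x) = deriv ψ ‖x‖ / ‖x‖ * ⟪v (t, x), x⟫ * ρ (t, x) -
      divergence (fun y => φ y • (ρ (t, y) • v (t, y))) x := by
  have hslice : Differentiable ℝ fun y : EuclideanSpace ℝ (Fin n) => (t, y) :=
    (differentiable_const t).prodMk differentiable_id
  have hu : Differentiable ℝ fun y => ρ (t, y) • v (t, y) := (hρ.comp hslice).smul (hv.comp hslice)
  have hpdT : pdT (fun z => ρ z * φ z.2) (t, x) = pdT ρ (t, x) * φ x :=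
    ((hasDerivAt_pdT hρ t x).mul_const (φ x)).deriv
  rw [divX_eq_divergence _ _ (hu x)] at hcont
  rw [hpdT, divergence_smul (hφ x) (hu x), fderiv_apply_of_radial hφψ (hφ x),
    real_inner_smul_left]
  linear_combination φ x * hcont

end TimeDerivative

theorem generalized_momentum_first_derivative_general
    (n : ℕ)
    (ρ : ℝ × EuclideanSpace ℝ (Fin n) → ℝ)
    (v : ℝ × EuclideanSpace ℝ (Fin n) → EuclideanSpace ℝ (Fin n))
    (hρ : ContDiff ℝ 1 ρ) (hv : ContDiff ℝ 1 v)
    (hρnonneg : ∀ q, 0 ≤ ρ q)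
    -- continuity equation
    (hcont : ∀ q, pdT ρ q + divX (fun z => ρ z • v z) q = 0)
    -- radial C¹ weight
    (φ : EuclideanSpace ℝ (Fin n) → ℝ) (ψ : ℝ → ℝ)
    (hφ : ContDiff ℝ 1 φ) (hφψ : ∀ x, φ x = ψ ‖x‖)
    -- integrability of the integrands
    (hint1 : ∀ t : ℝ, Integrable (fun x => ρ (t, x) * φ x))
    (hint2 : ∀ t : ℝ, Integrable (fun x =>
      ρ (t, x) * (deriv ψ ‖x‖ / ‖x‖) * ⟪v (t, x), x⟫))
    -- domination of the time derivative on compact time intervals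
    (hdom : ∀ a b : ℝ, a ≤ b → ∃ g : EuclideanSpace ℝ (Fin n) → ℝ, Integrable g ∧
      ∀ t ∈ Set.Icc a b, ∀ x, |pdT (fun z => ρ z * φ z.2) (t, x)| ≤ g x)
    -- decay at infinity
    (hdecay : ∃ R₀ > (0:ℝ), ∃ ε > (0:ℝ), ∃ C : ℝ → ℝ, Continuous C ∧
      ∀ t : ℝ, ∀ x : EuclideanSpace ℝ (Fin n), R₀ < ‖x‖ →
        ρ (t, x) * ‖v (t, x)‖ * ‖fderiv ℝ φ x‖ ≤ C t * ‖x‖ ^ (-(n:ℝ) + 1 - ε) ∧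
        ρ (t, x) * ‖v (t, x)‖ * |φ x| ≤ C t * ‖x‖ ^ (-(n:ℝ) + 1 - ε)) :
    ∀ t : ℝ, HasDerivAt (fun s => ∫ x, ρ (s, x) * φ x)
      (∫ x, (deriv ψ ‖x‖ / ‖x‖) * ⟪v (t, x), x⟫ * ρ (t, x)) t := by
  intro t
  obtain ⟨R₀, hR₀, ε, hε, C, -, hdecay⟩ := hdecay
  obtain ⟨g, hg, hgbound⟩ := hdom (t - 1) (t + 1) (by linarith)
  obtain ⟨hint', hderiv⟩ := hasDerivAt_integral_of_pdT (f := fun z => ρ z * φ z.2)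
    (hρ.mul (hφ.comp contDiff_snd)) (hint1 t) hg hgbound
  have hslice : ContDiff ℝ 1 fun y : EuclideanSpace ℝ (Fin n) => (t, y) :=
    contDiff_const.prodMk contDiff_id
  set w := fun y => φ y • (ρ (t, y) • v (t, y))
  have hw : Differentiable ℝ w :=
    (hφ.smul ((hρ.comp hslice).smul (hv.comp hslice))).differentiable one_ne_zero
  have hflux (x) := pdT_mul_radial_eq_sub_divergence (hρ.differentiable one_ne_zero)
    (hv.differentiable one_ne_zero) (hφ.differentiable one_ne_zero) hφψ (hcont (t, x))
  have hflux_int : Integrable fun x => deriv ψ ‖x‖ / ‖x‖ * ⟪v (t, x), x⟫ * ρ (t, x) :=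
    (hint2 t).congr (.of_forall fun x => by ring)
  have hdiv_int : Integrable (divergence w) :=
    (hflux_int.sub hint').congr (.of_forall fun x => by simp only [Pi.sub_apply, hflux]; ring)
  have hdiv_zero : ∫ x, divergence w x = 0 := by
    refine integral_divergence_eq_zero_of_norm_le_rpow hw hdiv_int hR₀.le hε
      (abs_nonneg (C t)) fun x hx => ?_
    calc ‖w x‖ = ρ (t, x) * ‖v (t, x)‖ * |φ x| := by
          rw [norm_smul, norm_smul, Real.norm_eq_abs, Real.norm_eq_abs,
            abs_of_nonneg (hρnonneg _)]
          ring
      _ ≤ C t * ‖x‖ ^ (-(n : ℝ) + 1 - ε) := (hdecay t x hx).2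
      _ ≤ |C t| * ‖x‖ ^ (-(n : ℝ) + 1 - ε) := by gcongr; exact le_abs_self _
  rwa [integral_congr_ae (.of_forall hflux), integral_sub hflux_int hdiv_int, hdiv_zero,
    sub_zero] at hderiv

/-- first identity of Lemma 1 on all of `ℝⁿ`: for a `C¹` solution of the
continuity equation and a radial `C¹` weight `φ(x) = ψ(|x|)`, under integrability, domination
and decay assumptions, the generalized momentum of mass `G_φ(t) = ∫ ρ(t,x) φ(x) dx` is
differentiable with `G_φ'(t) = ∫ (ψ'(|x|)/|x|) (v·x) ρ dx`. -/
theorem generalized_momentum_first_derivative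
    (n : ℕ) (hn : 1 ≤ n)
    (ρ : ℝ × EuclideanSpace ℝ (Fin n) → ℝ)
    (v : ℝ × EuclideanSpace ℝ (Fin n) → EuclideanSpace ℝ (Fin n))
    (hρ : ContDiff ℝ 1 ρ) (hv : ContDiff ℝ 1 v)
    (hρnonneg : ∀ q, 0 ≤ ρ q)
    -- continuity equation
    (hcont : ∀ q, pdT ρ q + divX (fun z => ρ z • v z) q = 0)
    -- radial C¹ weight
    (φ : EuclideanSpace ℝ (Fin n) → ℝ) (ψ : ℝ → ℝ)
    (hφ : ContDiff ℝ 1 φ) (hφψ : ∀ x, φ x = ψ ‖x‖)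
    -- integrability of the integrands
    (hint1 : ∀ t : ℝ, Integrable (fun x => ρ (t, x) * φ x))
    (hint2 : ∀ t : ℝ, Integrable (fun x =>
      ρ (t, x) * (deriv ψ ‖x‖ / ‖x‖) * ⟪v (t, x), x⟫))
    -- domination of the time derivative on compact time intervals
    (hdom : ∀ a b : ℝ, a ≤ b → ∃ g : EuclideanSpace ℝ (Fin n) → ℝ, Integrable g ∧
      ∀ t ∈ Set.Icc a b, ∀ x, |pdT (fun z => ρ z * φ z.2) (t, x)| ≤ g x)
    -- decay at infinity
    (hdecay : ∃ R₀ > (0:ℝ), ∃ ε > (0:ℝ), ∃ C : ℝ → ℝ, Continuous C ∧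
      ∀ t : ℝ, ∀ x : EuclideanSpace ℝ (Fin n), R₀ < ‖x‖ →
        ρ (t, x) * ‖v (t, x)‖ * ‖fderiv ℝ φ x‖ ≤ C t * ‖x‖ ^ (-(n:ℝ) + 1 - ε) ∧
        ρ (t, x) * ‖v (t, x)‖ * |φ x| ≤ C t * ‖x‖ ^ (-(n:ℝ) + 1 - ε)) :
    ∀ t : ℝ, HasDerivAt (fun s => ∫ x, ρ (s, x) * φ x)
      (∫ x, (deriv ψ ‖x‖ / ‖x‖) * ⟪v (t, x), x⟫ * ρ (t, x)) t :=
  generalized_momentum_first_derivative_general n ρ v hρ hv hρnonneg hcont φ ψ hφ hφψ hint1 hint2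
    hdom hdecay
end

section
/- Let n ≥ 1, γ > 1, and let (ρ, v, p) be a global C² classical solution on [0,∞) × ℝⁿ of the compressible Navier–Stokes system with zero heat conduction (as in the class K_{NS₀} setting), with ρ ≥ 0, p ≥ 0, total mass m := ∫ρ dx constant and finite, conserved total energy 𝓔 := ½∫ρ|v|² dx + (1/(γ−1))∫p dx > 0, and with G(t) := ½∫ρ|x|² dx finite and satisfying G''(t) = 2E_k(t) + n(γ−1)E_i(t). Define R(t) := (R₀^{n+1} + (n+1)∫₀ᵗ M_v(τ)dτ)^{1/(n+1)}, and assume the decay bounds ρ(t,x) ≤ M_ρ(t)|x|^{−n−2−ε} and |v(t,x)| ≤ M_v(t)|x|^{−n} hold for all t and all |x| > R(t), with continuous positive M_v, M_ρ and constants R₀ > 0, ε > 0. Then limsup_{t→∞} ( R(t)² + M_ρ(t) R(t)^{−ε} ) / t² > 0. In particular, it is impossible that simultaneously ∫₀ᵗ M_v(τ)dτ = o(t^{n+1}) and M_ρ(t)·(1 + ∫₀ᵗ M_v(τ)dτ)^{−ε/(n+1)} = o(t²) as t → ∞. -/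
/-!
The second moment `G(t) = ½∫ρ|x|²` satisfies `G'' = 2E_k + n(γ-1)E_i ≥ min(2, n(γ-1)) 𝓔 > 0`
by energy conservation, so it grows at least like `t²`. Splitting its integral at `|x| = R(t)`,
the mass bounds the inner part by `½mR²` and the decay of `ρ` bounds the outer part by
`C M_ρ R^{-ε}`, so `(R² + M_ρR^{-ε})/t²` stays away from `0`. Under the two `o`-hypotheses,
`R² = o(t²)` and `M_ρR^{-ε} = O(M_ρ(1 + ∫M_v)^{-ε/(n+1)}) = o(t²)`, which is impossible.
-/

open MeasureTheory Real Filter Asymptotics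
open scoped RealInnerProductSpace

open Set Metric Module

lemma sub_le_sub_of_hasDerivAt_le {f g f' g' : ℝ → ℝ} {a t : ℝ}
    (hf : ∀ s, a ≤ s → HasDerivAt f (f' s) s) (hg : ∀ s, a ≤ s → HasDerivAt g (g' s) s)
    (hle : ∀ s, a ≤ s → f' s ≤ g' s) (ht : a ≤ t) : f t - f a ≤ g t - g a := by
  have hmono : MonotoneOn (fun s => g s - f s) (Ici a) := by
    refine monotoneOn_of_hasDerivWithinAt_nonneg (convex_Ici a) (f' := fun s => g' s - f' s)
      (fun s hs => ((hg s hs).sub (hf s hs)).continuousAt.continuousWithinAt) (fun s hs => ?_)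
      (fun s hs => ?_) <;> rw [interior_Ici] at hs
    · exact ((hg s hs.le).sub (hf s hs.le)).hasDerivWithinAt
    · exact sub_nonneg.2 (hle s hs.le)
  have := hmono self_mem_Ici ht ht
  dsimp only at this
  linarith

lemma quadratic_le_of_le_deriv_deriv {G G'' : ℝ → ℝ} {a c t : ℝ}
    (hG : ∀ s, a ≤ s → DifferentiableAt ℝ G s)
    (hG'' : ∀ s, a ≤ s → HasDerivAt (deriv G) (G'' s) s) (hc : ∀ s, a ≤ s → c ≤ G'' s)
    (ht : a ≤ t) :
    G a + deriv G a * (t - a) + c / 2 * (t - a) ^ 2 ≤ G t := by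
  have hG' : ∀ s, a ≤ s → deriv G a + c * (s - a) ≤ deriv G s := fun s hs => by
    have := sub_le_sub_of_hasDerivAt_le (f := fun s => c * s)
      (fun s _ => (hasDerivAt_id s).const_mul c) hG'' (fun s hs => by simpa using hc s hs) hs
    linarith
  have := sub_le_sub_of_hasDerivAt_le
    (f := fun s => deriv G a * s + c / 2 * (s - a) ^ 2) (f' := fun s => deriv G a + c * (s - a))
    (fun s _ => (((hasDerivAt_id' s).const_mul (deriv G a)).add
      ((((hasDerivAt_id' s).sub_const a).pow 2).const_mul (c / 2))).congr_deriv (by simp; ring))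
    (fun s hs => (hG s hs).hasDerivAt) hG' ht
  simp only [sub_self] at this
  linarith

lemma eventually_mul_sq_le_of_le_deriv_deriv {G G'' : ℝ → ℝ} {c : ℝ} (hc : 0 < c)
    (hG : ∀ s, 0 ≤ s → DifferentiableAt ℝ G s)
    (hG'' : ∀ s, 0 ≤ s → HasDerivAt (deriv G) (G'' s) s) (hcG : ∀ s, 0 ≤ s → c ≤ G'' s) :
    ∀ᶠ t in atTop, c / 4 * t ^ 2 ≤ G t := by
  set a := G 0
  set b := deriv G 0
  filter_upwards [eventually_ge_atTop (max 1 (4 * (|a| + |b|) / c))] with t ht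
  have ht₁ : 1 ≤ t := le_of_max_le_left ht
  have hct : 4 * (|a| + |b|) ≤ c * t := by
    have := (div_le_iff₀ hc).1 (le_of_max_le_right ht)
    linarith
  have hquad := quadratic_le_of_le_deriv_deriv hG hG'' hcG (by linarith : (0 : ℝ) ≤ t)
  simp only [sub_zero] at hquad
  nlinarith [neg_abs_le a, neg_abs_le b, abs_nonneg a, abs_nonneg b]

lemma min_mul_add_le {a b x y : ℝ} (hx : 0 ≤ x) (hy : 0 ≤ y) :
    min a b * (x + y) ≤ a * x + b * y := by
  nlinarith [mul_le_mul_of_nonneg_right (min_le_left a b) hx,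
    mul_le_mul_of_nonneg_right (min_le_right a b) hy]

lemma indicator_norm_rpow {E : Type*} [Norm E] (R r : ℝ) :
    {x : E | R < ‖x‖}.indicator (fun x => ‖x‖ ^ r)
      = fun x => (Ioi R).indicator (fun y => y ^ r) ‖x‖ :=
  funext fun _ => indicator_comp_right (g := fun y : ℝ => y ^ r) norm

lemma eqOn_pow_smul_indicator_rpow {d : ℕ} (hd : 1 ≤ d) (R ε : ℝ) :
    EqOn (fun y : ℝ => y ^ (d - 1) • (Ioi R).indicator (fun y => y ^ (-(d : ℝ) - ε)) y)
      ((Ioi R).indicator fun y => y ^ (-1 - ε)) (Ioi 0) := by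
  intro y (hy : 0 < y)
  by_cases hyR : y ∈ Ioi R
  · simp only [smul_eq_mul, indicator_of_mem hyR]
    rw [← rpow_natCast, ← rpow_add hy, Nat.cast_sub hd]
    ring_nf
  · simp [indicator_of_notMem hyR]

section Decay

variable {E : Type*} [NormedAddCommGroup E] [NormedSpace ℝ E] [FiniteDimensional ℝ E]
  [MeasurableSpace E] [BorelSpace E] [Nontrivial E] (μ : Measure E) [μ.IsAddHaarMeasure]

lemma integrableOn_norm_rpow_of_lt_norm {R ε : ℝ} (hR : 0 < R) (hε : 0 < ε) :
    IntegrableOn (fun x : E => ‖x‖ ^ (-(finrank ℝ E : ℝ) - ε)) {x | R < ‖x‖} μ := by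
  rw [← integrable_indicator_iff (measurableSet_lt measurable_const measurable_norm),
    indicator_norm_rpow, integrable_fun_norm_addHaar,
    integrableOn_congr_fun (eqOn_pow_smul_indicator_rpow finrank_pos R ε) measurableSet_Ioi]
  exact ((integrable_indicator_iff measurableSet_Ioi).2
    (integrableOn_Ioi_rpow_of_lt (by linarith) hR)).integrableOn

lemma integral_norm_rpow_of_lt_norm {R ε : ℝ} (hR : 0 < R) (hε : 0 < ε) :
    ∫ x in {x | R < ‖x‖}, ‖x‖ ^ (-(finrank ℝ E : ℝ) - ε) ∂μ
      = finrank ℝ E * μ.real (ball 0 1) / ε * R ^ (-ε) := by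
  rw [← integral_indicator (measurableSet_lt measurable_const measurable_norm),
    indicator_norm_rpow, integral_fun_norm_addHaar,
    setIntegral_congr_fun measurableSet_Ioi (eqOn_pow_smul_indicator_rpow finrank_pos R ε),
    integral_indicator measurableSet_Ioi, Measure.restrict_restrict measurableSet_Ioi,
    inter_eq_left.2 (Ioi_subset_Ioi hR.le), integral_Ioi_rpow_of_lt (by linarith) hR,
    nsmul_eq_mul, smul_eq_mul, show -1 - ε + 1 = -ε by ring]
  field_simp

lemma integral_mul_norm_sq_le_of_decay {f : E → ℝ} {M R ε : ℝ} (hR : 0 < R) (hε : 0 < ε)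
    (hf₀ : ∀ x, 0 ≤ f x) (hf : Integrable f μ) (hf₂ : Integrable (fun x => f x * ‖x‖ ^ 2) μ)
    (hdecay : ∀ x, R < ‖x‖ → f x ≤ M * ‖x‖ ^ (-(finrank ℝ E : ℝ) - 2 - ε)) :
    ∫ x, f x * ‖x‖ ^ 2 ∂μ
      ≤ (∫ x, f x ∂μ) * R ^ 2 + M * (finrank ℝ E * μ.real (ball 0 1) / ε * R ^ (-ε)) := by
  set S : Set E := {x | R < ‖x‖}
  have hS : MeasurableSet S := measurableSet_lt measurable_const measurable_norm
  have hinner : ∫ x in Sᶜ, f x * ‖x‖ ^ 2 ∂μ ≤ (∫ x, f x ∂μ) * R ^ 2 :=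
    calc ∫ x in Sᶜ, f x * ‖x‖ ^ 2 ∂μ ≤ ∫ x in Sᶜ, f x * R ^ 2 ∂μ := by
          refine setIntegral_mono_on hf₂.integrableOn (hf.mul_const _).integrableOn hS.compl
            fun x hx => ?_
          gcongr
          · exact hf₀ x
          · exact not_lt.1 hx
      _ = (∫ x in Sᶜ, f x ∂μ) * R ^ 2 := integral_mul_const _ _
      _ ≤ (∫ x, f x ∂μ) * R ^ 2 :=
          mul_le_mul_of_nonneg_right (setIntegral_le_integral hf (.of_forall hf₀)) (sq_nonneg R)
  have houter : ∫ x in S, f x * ‖x‖ ^ 2 ∂μ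
      ≤ M * (finrank ℝ E * μ.real (ball 0 1) / ε * R ^ (-ε)) :=
    calc ∫ x in S, f x * ‖x‖ ^ 2 ∂μ ≤ ∫ x in S, M * ‖x‖ ^ (-(finrank ℝ E : ℝ) - ε) ∂μ := by
          refine setIntegral_mono_on hf₂.integrableOn
            ((integrableOn_norm_rpow_of_lt_norm μ hR hε).const_mul M) hS fun x (hx : R < ‖x‖) => ?_
          have hx₀ : 0 < ‖x‖ := hR.trans hx
          calc f x * ‖x‖ ^ 2 ≤ M * ‖x‖ ^ (-(finrank ℝ E : ℝ) - 2 - ε) * ‖x‖ ^ (2 : ℝ) := by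
                rw [rpow_two]; gcongr; exact hdecay x hx
            _ = M * ‖x‖ ^ (-(finrank ℝ E : ℝ) - ε) := by
                rw [mul_assoc, ← rpow_add hx₀]; ring_nf
      _ = _ := by rw [integral_const_mul, integral_norm_rpow_of_lt_norm μ hR hε]
  rw [← integral_add_compl hS hf₂]
  linarith

end Decay

lemma isLittleO_add_mul_rpow_inv_sq {b q : ℝ} {I : ℝ → ℝ} (hq : 0 < q)
    (hA : ∀ᶠ t in atTop, 0 ≤ b + q * I t) (hI : I =o[atTop] fun t => t ^ q) :
    (fun t => ((b + q * I t) ^ (1 / q)) ^ 2) =o[atTop] fun t => t ^ 2 := by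
  have hb : (fun _ => b) =o[atTop] fun t : ℝ => t ^ q :=
    isLittleO_const_left.2 <| .inr <| tendsto_norm_atTop_atTop.comp (tendsto_rpow_atTop hq)
  have hpow := (hb.add (hI.const_mul_left q)).rpow (r := 2 / q) (by positivity)
    (eventually_ge_atTop 0 |>.mono fun t ht => rpow_nonneg ht q)
  refine hpow.congr' (hA.mono fun t ht => ?_) (eventually_ge_atTop 0 |>.mono fun t ht => ?_)
  · dsimp only
    rw [← rpow_natCast, ← rpow_mul ht, Nat.cast_ofNat, one_div_mul_eq_div]
  · dsimp only
    rw [← rpow_mul ht, mul_div_cancel₀ _ hq.ne', rpow_two]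

lemma isBigO_mul_add_mul_rpow_inv_rpow_neg {b q ε : ℝ} {I M : ℝ → ℝ} (hb : 0 < b) (hq : 1 ≤ q)
    (hε : 0 ≤ ε) (hI : ∀ᶠ t in atTop, 0 ≤ I t) (hM : ∀ t, 0 ≤ M t) :
    (fun t => M t * ((b + q * I t) ^ (1 / q)) ^ (-ε))
      =O[atTop] fun t => M t * (1 + I t) ^ (-(ε / q)) := by
  set c := min b 1
  have hc : 0 < c := lt_min hb one_pos
  refine .of_bound (c ^ (-(ε / q))) (hI.mono fun t ht => ?_)
  have hA : c * (1 + I t) ≤ b + q * I t := by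
    nlinarith [min_le_left b 1, min_le_right b 1]
  have hpos : 0 < c * (1 + I t) := by positivity
  have hA₀ : 0 ≤ b + q * I t := hpos.le.trans hA
  have hpow_le : ((b + q * I t) ^ (1 / q)) ^ (-ε) ≤ c ^ (-(ε / q)) * (1 + I t) ^ (-(ε / q)) :=
    calc ((b + q * I t) ^ (1 / q)) ^ (-ε) = (b + q * I t) ^ (-(ε / q)) := by
          rw [← rpow_mul hA₀]; ring_nf
      _ ≤ (c * (1 + I t)) ^ (-(ε / q)) :=
          rpow_le_rpow_of_nonpos hpos hA (neg_nonpos.2 (by positivity))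
      _ = c ^ (-(ε / q)) * (1 + I t) ^ (-(ε / q)) := mul_rpow hc.le (by linarith)
  rw [norm_of_nonneg (mul_nonneg (hM t) (by positivity)),
    norm_of_nonneg (mul_nonneg (hM t) (by positivity))]
  calc M t * ((b + q * I t) ^ (1 / q)) ^ (-ε)
      ≤ M t * (c ^ (-(ε / q)) * (1 + I t) ^ (-(ε / q))) := mul_le_mul_of_nonneg_left hpow_le (hM t)
    _ = c ^ (-(ε / q)) * (M t * (1 + I t) ^ (-(ε / q))) := by ring

lemma isLittleO_sq_add_mul_rpow_neg {b q ε : ℝ} {I M R : ℝ → ℝ} (hb : 0 < b) (hq : 1 ≤ q)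
    (hε : 0 ≤ ε) (hR : ∀ t, R t = (b + q * I t) ^ (1 / q)) (hI : ∀ᶠ t in atTop, 0 ≤ I t)
    (hM : ∀ t, 0 ≤ M t) (hIo : I =o[atTop] fun t => t ^ q)
    (hMo : (fun t => M t * (1 + I t) ^ (-(ε / q))) =o[atTop] fun t => t ^ 2) :
    (fun t => R t ^ 2 + M t * R t ^ (-ε)) =o[atTop] fun t => t ^ 2 := by
  simp only [hR]
  refine (isLittleO_add_mul_rpow_inv_sq (by positivity) ?_ hIo).add
    ((isBigO_mul_add_mul_rpow_inv_rpow_neg hb hq hε hI hM).trans_isLittleO hMo)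
  filter_upwards [hI] with t ht
  have := mul_nonneg (by linarith : 0 ≤ q) ht
  linarith

lemma eventually_div_le_div_sq_of_mul_sq_le {G X : ℝ → ℝ} {c K : ℝ} (hK : 0 < K)
    (hlow : ∀ᶠ t in atTop, c * t ^ 2 ≤ G t) (hup : ∀ᶠ t in atTop, G t ≤ K * X t) :
    ∀ᶠ t in atTop, c / K ≤ X t / t ^ 2 := by
  filter_upwards [hlow, hup, eventually_gt_atTop 0] with t hl hu ht
  rw [div_le_div_iff₀ hK (by positivity)]
  linarith

lemma not_isLittleO_of_eventually_le_div {α : Type*} {l : Filter α} [l.NeBot] {f g : α → ℝ}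
    {c : ℝ} (hc : 0 < c) (h : ∀ᶠ x in l, c ≤ f x / g x) : ¬ f =o[l] g := fun hfg =>
  let ⟨_, hle, hlt⟩ := (h.and (hfg.tendsto_div_nhds_zero.eventually (gt_mem_nhds hc))).exists
  hlt.not_ge hle

theorem navier_stokes_growth_of_bounding_functions_general
    (n : ℕ) (hn : 1 ≤ n) (γ : ℝ) (hγ : 1 < γ)
    (ρ p : ℝ × EuclideanSpace ℝ (Fin n) → ℝ)
    (v : ℝ × EuclideanSpace ℝ (Fin n) → EuclideanSpace ℝ (Fin n))
    (hρnonneg : ∀ q, 0 ≤ q.1 → 0 ≤ ρ q) (hpnonneg : ∀ q, 0 ≤ q.1 → 0 ≤ p q)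
    -- total mass, constant and finite
    (m : ℝ)
    (hmass : ∀ t : ℝ, 0 ≤ t → Integrable (fun x => ρ (t, x)) ∧ (∫ x, ρ (t, x)) = m)
    -- conserved, positive total energy
    (𝓔 : ℝ) (h𝓔 : 0 < 𝓔)
    (henergy : ∀ t : ℝ, 0 ≤ t →
      (1/2) * (∫ x, ρ (t, x) * ‖v (t, x)‖ ^ 2) + (1 / (γ - 1)) * (∫ x, p (t, x)) = 𝓔)
    -- finite momentum of mass satisfying G'' = 2E_k + n(γ−1)E_i
    (hGint : ∀ t : ℝ, 0 ≤ t → Integrable (fun x => ρ (t, x) * ‖x‖ ^ 2))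
    (hGdiff : ∀ t : ℝ, 0 ≤ t →
      DifferentiableAt ℝ (fun s => (1/2) * ∫ x, ρ (s, x) * ‖x‖ ^ 2) t)
    (hG'' : ∀ t : ℝ, 0 ≤ t →
      HasDerivAt (deriv (fun s => (1/2) * ∫ x, ρ (s, x) * ‖x‖ ^ 2))
        (2 * ((1/2) * ∫ x, ρ (t, x) * ‖v (t, x)‖ ^ 2)
          + n * (γ - 1) * ((1 / (γ - 1)) * ∫ x, p (t, x))) t)
    -- the decay class, outside the ball of radius R(t)
    (Mv Mρ : ℝ → ℝ)
    (hMvpos : ∀ t, 0 < Mv t) (hMρpos : ∀ t, 0 < Mρ t)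
    (R₀ ε : ℝ) (hR₀ : 0 < R₀) (hε : 0 < ε)
    (Rt : ℝ → ℝ)
    (hRt : ∀ t : ℝ, Rt t =
      (R₀ ^ ((n:ℝ) + 1) + ((n:ℝ) + 1) * ∫ τ in (0:ℝ)..t, Mv τ) ^ (1 / ((n:ℝ) + 1)))
    (hdecay : ∀ t : ℝ, 0 ≤ t → ∀ x : EuclideanSpace ℝ (Fin n), Rt t < ‖x‖ →
      ρ (t, x) ≤ Mρ t * ‖x‖ ^ (-(n:ℝ) - 2 - ε) ∧
      ‖v (t, x)‖ ≤ Mv t * ‖x‖ ^ (-(n:ℝ))) :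
    (∃ c > (0:ℝ), ∃ᶠ t in atTop, c ≤ (Rt t ^ 2 + Mρ t * Rt t ^ (-ε)) / t ^ 2) ∧
    ¬ (((fun t => ∫ τ in (0:ℝ)..t, Mv τ) =o[atTop] fun t : ℝ => t ^ (n + 1)) ∧
       ((fun t => Mρ t * (1 + ∫ τ in (0:ℝ)..t, Mv τ) ^ (-(ε / ((n:ℝ) + 1))))
          =o[atTop] fun t : ℝ => t ^ 2)) := by
  have : Nontrivial (EuclideanSpace ℝ (Fin n)) :=
    nontrivial_of_finrank_pos (by rw [finrank_euclideanSpace_fin]; omega)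
  set G : ℝ → ℝ := fun s => (1/2) * ∫ x, ρ (s, x) * ‖x‖ ^ 2
  have hI : ∀ t, 0 ≤ t → 0 ≤ ∫ τ in (0:ℝ)..t, Mv τ := fun t ht =>
    intervalIntegral.integral_nonneg ht fun u _ => (hMvpos u).le
  have hRpos : ∀ t, 0 ≤ t → 0 < Rt t := fun t ht => by
    rw [hRt]
    exact rpow_pos_of_pos (add_pos_of_pos_of_nonneg (rpow_pos_of_pos hR₀ _)
      (mul_nonneg (by positivity) (hI t ht))) _
  set c₀ := min 2 ((n:ℝ) * (γ - 1)) * 𝓔 with hc₀_def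
  have hc₀ : 0 < c₀ :=
    mul_pos (lt_min two_pos (mul_pos (by exact_mod_cast hn) (by linarith))) h𝓔
  have hc₀_le : ∀ t, 0 ≤ t → c₀ ≤ 2 * ((1/2) * ∫ x, ρ (t, x) * ‖v (t, x)‖ ^ 2)
      + n * (γ - 1) * ((1 / (γ - 1)) * ∫ x, p (t, x)) := fun t ht => by
    rw [hc₀_def, ← henergy t ht]
    refine min_mul_add_le (mul_nonneg (by norm_num) (integral_nonneg fun x => ?_))
      (mul_nonneg (by simp only [one_div, inv_nonneg]; linarith)
        (integral_nonneg fun x => hpnonneg (t, x) ht))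
    exact mul_nonneg (hρnonneg (t, x) ht) (sq_nonneg _)
  have hlower : ∀ᶠ t in atTop, c₀ / 4 * t ^ 2 ≤ G t :=
    eventually_mul_sq_le_of_le_deriv_deriv hc₀ hGdiff hG'' hc₀_le
  set C := (finrank ℝ (EuclideanSpace ℝ (Fin n)) : ℝ)
    * volume.real (ball (0 : EuclideanSpace ℝ (Fin n)) 1) / ε
  have hC : 0 < C := div_pos (mul_pos (Nat.cast_pos.2 finrank_pos)
    (ENNReal.toReal_pos (measure_ball_pos _ _ one_pos).ne' measure_ball_lt_top.ne)) hε
  have hm : 0 ≤ m := (hmass 0 le_rfl).2 ▸ integral_nonneg fun x => hρnonneg (0, x) le_rfl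
  have hupper : ∀ t, 0 ≤ t → G t ≤ (m + C) * (Rt t ^ 2 + Mρ t * Rt t ^ (-ε)) := fun t ht => by
    have h := integral_mul_norm_sq_le_of_decay volume (hRpos t ht) hε
      (fun x => hρnonneg (t, x) ht) (hmass t ht).1 (hGint t ht)
      (by rw [finrank_euclideanSpace_fin]; exact fun x hx => (hdecay t ht x hx).1)
    rw [(hmass t ht).2] at h
    have hMρR : 0 ≤ Mρ t * Rt t ^ (-ε) := mul_nonneg (hMρpos t).le (rpow_nonneg (hRpos t ht).le _)
    simp only [G]
    nlinarith [sq_nonneg (Rt t)]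
  have hratio : ∀ᶠ t in atTop,
      c₀ / 4 / (m + C) ≤ (Rt t ^ 2 + Mρ t * Rt t ^ (-ε)) / t ^ 2 :=
    eventually_div_le_div_sq_of_mul_sq_le (by positivity) hlower
      (eventually_ge_atTop 0 |>.mono hupper)
  refine ⟨⟨_, by positivity, hratio.frequently⟩, fun ⟨hMv, hMρ⟩ =>
    not_isLittleO_of_eventually_le_div (by positivity) hratio ?_⟩
  refine isLittleO_sq_add_mul_rpow_neg (rpow_pos_of_pos hR₀ _) (by simp) hε.le hRt
    (eventually_ge_atTop 0 |>.mono hI) (fun t => (hMρpos t).le) ?_ hMρ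
  exact hMv.congr_right fun t => by rw [← rpow_natCast]; push_cast; rfl

/-- Theorem 1: a global classical solution of the compressible
Navier–Stokes system with zero heat conduction, lying in the decay class `K_{NS₀}`, forces
the bounding functions to grow: `limsup_{t→∞} (R(t)² + M_ρ(t)R(t)^{−ε})/t² > 0`, where
`R(t) = (R₀^{n+1} + (n+1)∫₀ᵗM_v)^{1/(n+1)}`; in particular one cannot have simultaneously
`∫₀ᵗ M_v = o(t^{n+1})` and `M_ρ(t)(1+∫₀ᵗM_v)^{−ε/(n+1)} = o(t²)`. -/
theorem navier_stokes_growth_of_bounding_functions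
    (n : ℕ) (hn : 1 ≤ n) (γ μ lam : ℝ) (hγ : 1 < γ)
    (hμ : 0 ≤ μ) (hlam : 0 ≤ lam + (2 / n) * μ)
    (ρ p : ℝ × EuclideanSpace ℝ (Fin n) → ℝ)
    (v : ℝ × EuclideanSpace ℝ (Fin n) → EuclideanSpace ℝ (Fin n))
    (T : ℝ × EuclideanSpace ℝ (Fin n) → Fin n → Fin n → ℝ)
    (hρ : ContDiff ℝ 2 ρ) (hv : ContDiff ℝ 2 v) (hp : ContDiff ℝ 2 p)
    (hρnonneg : ∀ q, 0 ≤ q.1 → 0 ≤ ρ q) (hpnonneg : ∀ q, 0 ≤ q.1 → 0 ≤ p q)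
    -- the Newton-law stress tensor
    (hT : ∀ q i j, T q i j =
      μ * (pdX (fun z => v z j) i q + pdX (fun z => v z i) j q)
        + lam * divX v q * (if i = j then 1 else 0))
    -- the compressible Navier–Stokes system with zero heat conduction on [0,∞) × ℝⁿ
    (hcont : ∀ q : ℝ × EuclideanSpace ℝ (Fin n), 0 ≤ q.1 →
      pdT ρ q + divX (fun z => ρ z • v z) q = 0)
    (hmom : ∀ q : ℝ × EuclideanSpace ℝ (Fin n), 0 ≤ q.1 → ∀ i,
      pdT (fun z => ρ z * v z i) q
        + (∑ j, pdX (fun z => ρ z * v z i * v z j) j q) + pdX p i q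
      = ∑ j, pdX (fun z => T z i j) j q)
    (hpress : ∀ q : ℝ × EuclideanSpace ℝ (Fin n), 0 ≤ q.1 →
      pdT p q + (∑ i, v q i * pdX p i q) + γ * p q * divX v q
        = (γ - 1) * ∑ i, ∑ j, T q i j * pdX (fun z => v z i) j q)
    -- total mass, constant and finite
    (m : ℝ)
    (hmass : ∀ t : ℝ, 0 ≤ t → Integrable (fun x => ρ (t, x)) ∧ (∫ x, ρ (t, x)) = m)
    -- conserved, positive total energy
    (𝓔 : ℝ) (h𝓔 : 0 < 𝓔)
    (hEkint : ∀ t : ℝ, 0 ≤ t → Integrable (fun x => ρ (t, x) * ‖v (t, x)‖ ^ 2))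
    (hEiint : ∀ t : ℝ, 0 ≤ t → Integrable (fun x => p (t, x)))
    (henergy : ∀ t : ℝ, 0 ≤ t →
      (1/2) * (∫ x, ρ (t, x) * ‖v (t, x)‖ ^ 2) + (1 / (γ - 1)) * (∫ x, p (t, x)) = 𝓔)
    -- finite momentum of mass satisfying G'' = 2E_k + n(γ−1)E_i
    (hGint : ∀ t : ℝ, 0 ≤ t → Integrable (fun x => ρ (t, x) * ‖x‖ ^ 2))
    (hGdiff : ∀ t : ℝ, 0 ≤ t →
      DifferentiableAt ℝ (fun s => (1/2) * ∫ x, ρ (s, x) * ‖x‖ ^ 2) t)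
    (hG'' : ∀ t : ℝ, 0 ≤ t →
      HasDerivAt (deriv (fun s => (1/2) * ∫ x, ρ (s, x) * ‖x‖ ^ 2))
        (2 * ((1/2) * ∫ x, ρ (t, x) * ‖v (t, x)‖ ^ 2)
          + n * (γ - 1) * ((1 / (γ - 1)) * ∫ x, p (t, x))) t)
    -- the decay class, outside the ball of radius R(t)
    (Mv Mρ : ℝ → ℝ) (hMv : Continuous Mv) (hMρ : Continuous Mρ)
    (hMvpos : ∀ t, 0 < Mv t) (hMρpos : ∀ t, 0 < Mρ t)
    (R₀ ε : ℝ) (hR₀ : 0 < R₀) (hε : 0 < ε)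
    (Rt : ℝ → ℝ)
    (hRt : ∀ t : ℝ, Rt t =
      (R₀ ^ ((n:ℝ) + 1) + ((n:ℝ) + 1) * ∫ τ in (0:ℝ)..t, Mv τ) ^ (1 / ((n:ℝ) + 1)))
    (hdecay : ∀ t : ℝ, 0 ≤ t → ∀ x : EuclideanSpace ℝ (Fin n), Rt t < ‖x‖ →
      ρ (t, x) ≤ Mρ t * ‖x‖ ^ (-(n:ℝ) - 2 - ε) ∧
      ‖v (t, x)‖ ≤ Mv t * ‖x‖ ^ (-(n:ℝ))) :
    (∃ c > (0:ℝ), ∃ᶠ t in atTop, c ≤ (Rt t ^ 2 + Mρ t * Rt t ^ (-ε)) / t ^ 2) ∧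
    ¬ (((fun t => ∫ τ in (0:ℝ)..t, Mv τ) =o[atTop] fun t : ℝ => t ^ (n + 1)) ∧
       ((fun t => Mρ t * (1 + ∫ τ in (0:ℝ)..t, Mv τ) ^ (-(ε / ((n:ℝ) + 1))))
          =o[atTop] fun t : ℝ => t ^ 2)) :=
  navier_stokes_growth_of_bounding_functions_general n hn γ hγ ρ p v hρnonneg hpnonneg m hmass 𝓔 h𝓔
    henergy hGint hGdiff hG'' Mv Mρ hMvpos hMρpos R₀ ε hR₀ hε Rt hRt hdecay
end

section
/- Let K > 0, λ > 2, and a₀ ≥ 0. Then the integro-differential Cauchy problem a'(t) = −a(t)² + K exp(−λ∫₀ᵗ a(s)ds), a(0) = a₀, has a unique C¹ solution defined on all of [0,∞); moreover a(t) ≥ 0 for all t ≥ 0, a is bounded, and there exists a constant C > 0 such that a(t) ≤ C/(1+t) for all t ≥ 0, i.e. a(t) = O(t^{−1}) as t → ∞. -/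
open Real intervalIntegral

/-!
With `e = exp (-λ ∫₀ᵗ a)` the problem is the polynomial system `a' = -a² + K e`, `e' = -λ a e`,
`(a, e)(0) = (a₀, 1)`. Clamping `(a, e)` to a box `[0, c] × [0, 1]` gives a bounded Lipschitz
field and hence a global solution; for `c² > K` the barriers `a = 0`, `a = c` and
`e = exp (-(λc + 1) t)` are never crossed, so the clamp is inactive for `t ≥ 0`. Uniqueness is
Grönwall for this `C¹` system.

With `I = ∫₀ᵗ a`, the function `b = exp I` solves `b'' = K b^(1-λ)`. Hence `ψ = b' = a b` is
increasing, so `ψ ≥ a₀ ≥ 0`, and the energy `(λ - 2) ψ² + 2K b^(2-λ)` is conserved, so `ψ` is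
bounded. Since `b' = ψ ≥ ψ(1) > 0` for `t ≥ 1`, `b` grows linearly and `a = ψ / b = O(1/t)`.
-/

open Set
open scoped NNReal

theorem image_le_of_hasDerivAt_lt_deriv_boundary_Ici {f f' B B' : ℝ → ℝ} {a : ℝ}
    (hf : ∀ t, a ≤ t → HasDerivAt f (f' t) t) (hB : ∀ t, a ≤ t → HasDerivAt B (B' t) t)
    (ha : f a ≤ B a) (bound : ∀ t, a ≤ t → f t = B t → f' t < B' t) :
    ∀ t, a ≤ t → f t ≤ B t := fun _ ht =>
  image_le_of_deriv_right_lt_deriv_boundary'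
    (fun s hs => (hf s hs.1).continuousAt.continuousWithinAt)
    (fun s hs => (hf s hs.1).hasDerivWithinAt) ha
    (fun s hs => (hB s hs.1).continuousAt.continuousWithinAt)
    (fun s hs => (hB s hs.1).hasDerivWithinAt) (fun s hs => bound s hs.1) ⟨ht, le_rfl⟩

theorem strictMonoOn_Ici_of_hasDerivAt_pos {f f' : ℝ → ℝ} {a : ℝ}
    (hf : ∀ t, a ≤ t → HasDerivAt f (f' t) t) (hpos : ∀ t, a < t → 0 < f' t) :
    StrictMonoOn f (Ici a) :=
  strictMonoOn_of_hasDerivWithinAt_pos (convex_Ici a)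
    (fun t ht => (hf t ht).continuousAt.continuousWithinAt)
    (fun t ht => (hf t (interior_subset ht : t ∈ Ici a)).hasDerivWithinAt)
    (fun t ht => hpos t (by simpa using ht))

theorem monotoneOn_Ici_of_hasDerivAt_nonneg {f f' : ℝ → ℝ} {a : ℝ}
    (hf : ∀ t, a ≤ t → HasDerivAt f (f' t) t) (hnn : ∀ t, a < t → 0 ≤ f' t) :
    MonotoneOn f (Ici a) :=
  monotoneOn_of_hasDerivWithinAt_nonneg (convex_Ici a)
    (fun t ht => (hf t ht).continuousAt.continuousWithinAt)
    (fun t ht => (hf t (interior_subset ht : t ∈ Ici a)).hasDerivWithinAt)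
    (fun t ht => hnn t (by simpa using ht))

theorem ContinuousOn.hasDerivWithinAt_integral_Ici {E : Type*} [NormedAddCommGroup E]
    [NormedSpace ℝ E] [CompleteSpace E] {f : ℝ → E} {a b : ℝ}
    (hf : ContinuousOn f (Ici a)) (hb : a ≤ b) :
    HasDerivWithinAt (fun u => ∫ x in a..u, f x) (f b) (Ici b) b :=
  have hsub : Ioi b ⊆ Ici a := fun _ hx => hb.trans (le_of_lt hx)
  integral_hasDerivWithinAt_right
    ((hf.mono Icc_subset_Ici_self).intervalIntegrable_of_Icc hb)
    ((hf.mono hsub).stronglyMeasurableAtFilter_nhdsWithin measurableSet_Ioi b)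
    ((hf b hb).mono hsub)

section ODE

variable {E : Type*} [NormedAddCommGroup E] [NormedSpace ℝ E]

theorem ODE_solution_unique_of_contDiff {v : E → E} (hv : ContDiff ℝ 1 v) {f g : ℝ → E}
    {a b : ℝ} (hf : ContinuousOn f (Icc a b))
    (hf' : ∀ t ∈ Ico a b, HasDerivWithinAt f (v (f t)) (Ici t) t)
    (hg : ContinuousOn g (Icc a b))
    (hg' : ∀ t ∈ Ico a b, HasDerivWithinAt g (v (g t)) (Ici t) t)
    (ha : f a = g a) : EqOn f g (Icc a b) := by
  obtain ⟨L, hL⟩ := hv.locallyLipschitz.locallyLipschitzOn.exists_lipschitzOnWith_of_compact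
    ((isCompact_Icc.image_of_continuousOn hf).union (isCompact_Icc.image_of_continuousOn hg))
  exact ODE_solution_unique_of_mem_Icc_right (fun _ _ => hL) hf hf'
    (fun t ht => Or.inl (mem_image_of_mem f (Ico_subset_Icc_self ht))) hg hg'
    (fun t ht => Or.inr (mem_image_of_mem g (Ico_subset_Icc_self ht))) ha

theorem exists_hasDerivAt_of_lipschitzWith_of_norm_le [CompleteSpace E] {v : E → E} {L : ℝ≥0}
    {C : ℝ} (hv : LipschitzWith L v) (hC : ∀ x, ‖v x‖ ≤ C) (x₀ : E) :
    ∃ γ : ℝ → E, γ 0 = x₀ ∧ ∀ t, HasDerivAt γ (v (γ t)) t := by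
  have hloc : ∀ T : ℝ, ∃ γ : ℝ → E, γ 0 = x₀ ∧ ∀ t ∈ Ioo (-T) T, HasDerivAt γ (v (γ t)) t := by
    intro T
    rcases le_or_gt T 0 with hT | hT
    · exact ⟨fun _ => x₀, rfl, fun t ht => absurd (ht.1.trans ht.2) (by linarith)⟩
    have hpl : IsPicardLindelof (fun _ => v) (tmin := -T) (tmax := T) ⟨0, by simp [hT.le]⟩ x₀
        (C.toNNReal * T.toNNReal) 0 C.toNNReal L :=
      .of_time_independent (fun x _ => (hC x).trans (le_coe_toNNReal C)) hv.lipschitzOnWith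
        (by simp [hT.le])
    obtain ⟨γ, hγ0, hγ⟩ := hpl.exists_eq_forall_mem_Icc_hasDerivWithinAt₀
    exact ⟨γ, hγ0, fun t ht =>
      (hγ t (Ioo_subset_Icc_self ht)).hasDerivAt (Icc_mem_nhds ht.1 ht.2)⟩
  choose γ hγ0 hγ using hloc
  have hagree : ∀ T T', 0 < T → T ≤ T' → EqOn (γ T) (γ T') (Ioo (-T) T) := fun T T' hT hTT' =>
    ODE_solution_unique_of_mem_Ioo (s := fun _ => univ) (fun _ _ => hv.lipschitzOnWith)
      ⟨neg_lt_zero.2 hT, hT⟩ (fun t ht => ⟨hγ T t ht, trivial⟩)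
      (fun t ht => ⟨hγ T' t (Ioo_subset_Ioo (neg_le_neg hTT') hTT' ht), trivial⟩)
      ((hγ0 T).trans (hγ0 T').symm)
  refine ⟨fun t => γ (|t| + 1) t, hγ0 _, fun t => ?_⟩
  have ht : t ∈ Ioo (-(|t| + 1)) (|t| + 1) := abs_lt.1 (lt_add_one _)
  refine (hγ _ t ht).congr_of_eventuallyEq ?_
  filter_upwards [Ioo_mem_nhds ht.1 ht.2] with s hs
  rcases le_total (|s| + 1) (|t| + 1) with h | h
  · exact hagree _ _ (by positivity) h (abs_lt.1 (lt_add_one _))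
  · exact (hagree _ _ (by positivity) h hs).symm

end ODE

def SolvesDeformationODE (K lam a₀ : ℝ) (a : ℝ → ℝ) : Prop :=
  a 0 = a₀ ∧ ∀ t : ℝ, 0 ≤ t →
    HasDerivAt a (-(a t) ^ 2 + K * Real.exp (-lam * ∫ s in (0:ℝ)..t, a s)) t

def deformationField (K lam : ℝ) (p : ℝ × ℝ) : ℝ × ℝ := (-p.1 ^ 2 + K * p.2, -lam * p.1 * p.2)

noncomputable def phasePath (lam : ℝ) (a : ℝ → ℝ) (t : ℝ) : ℝ × ℝ :=
  (a t, Real.exp (-lam * ∫ s in (0:ℝ)..t, a s))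

def clampBox (c : ℝ) (p : ℝ × ℝ) : ℝ × ℝ := (max (min p.1 c) 0, max (min p.2 1) 0)

section DeformationField

variable {K lam c : ℝ}

theorem contDiff_deformationField : ContDiff ℝ 1 (deformationField K lam) := by
  unfold deformationField; fun_prop

theorem lipschitzWith_clampBox : LipschitzWith 1 (clampBox c) := by
  have h := ((LipschitzWith.prod_fst.min_const c).max_const 0).prodMk
    ((LipschitzWith.prod_snd.min_const 1).max_const 0)
  rw [max_self] at h
  exact h

theorem clampBox_mem (hc : 0 ≤ c) (p : ℝ × ℝ) : clampBox c p ∈ Icc 0 c ×ˢ Icc (0:ℝ) 1 :=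
  ⟨⟨le_max_right _ _, max_le (min_le_right _ _) hc⟩,
    ⟨le_max_right _ _, max_le (min_le_right _ _) zero_le_one⟩⟩

theorem clampBox_eq_self {p : ℝ × ℝ} (hp : p ∈ Icc 0 c ×ˢ Icc (0:ℝ) 1) : clampBox c p = p := by
  obtain ⟨⟨h1, h2⟩, h3, h4⟩ := hp
  simp [clampBox, *]

theorem exists_lipschitzWith_deformationField_comp_clampBox (hc : 0 ≤ c) :
    ∃ L, LipschitzWith L (deformationField K lam ∘ clampBox c) := by
  obtain ⟨L, hL⟩ := contDiff_deformationField.contDiffOn.exists_lipschitzOnWith one_ne_zero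
    ((convex_Icc 0 c).prod (convex_Icc 0 1)) (isCompact_Icc.prod isCompact_Icc)
  exact ⟨L * 1, lipschitzOnWith_univ.1 <|
    hL.comp lipschitzWith_clampBox.lipschitzOnWith fun p _ => clampBox_mem hc p⟩

theorem exists_norm_deformationField_clampBox_le (hc : 0 ≤ c) :
    ∃ C, ∀ p, ‖deformationField K lam (clampBox c p)‖ ≤ C := by
  obtain ⟨C, hC⟩ := (isCompact_Icc.prod isCompact_Icc).exists_bound_of_continuousOn
    contDiff_deformationField.continuous.continuousOn (f := deformationField K lam)
    (s := Icc 0 c ×ˢ Icc (0:ℝ) 1)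
  exact ⟨C, fun p => hC _ (clampBox_mem hc p)⟩

end DeformationField

section Existence

variable {K lam a₀ c : ℝ}

theorem mem_box_of_hasDerivAt_clampBox (hK : 0 < K) (hlam : 0 ≤ lam) (ha₀ : 0 ≤ a₀)
    (hca : a₀ ≤ c) (hcK : K < c ^ 2) {x : ℝ → ℝ × ℝ} (hx0 : x 0 = (a₀, 1))
    (hx : ∀ t, HasDerivAt x (deformationField K lam (clampBox c (x t))) t) :
    ∀ t, 0 ≤ t → x t ∈ Icc 0 c ×ˢ Icc (0:ℝ) 1 ∧ 0 < (x t).2 := by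
  set α : ℝ → ℝ := fun t => (clampBox c (x t)).1
  set ε : ℝ → ℝ := fun t => (clampBox c (x t)).2
  have hc : 0 ≤ c := ha₀.trans hca
  have hα : ∀ t, 0 ≤ α t ∧ α t ≤ c := fun t => (clampBox_mem hc (x t)).1
  have hε : ∀ t, 0 ≤ ε t ∧ ε t ≤ 1 := fun t => (clampBox_mem hc (x t)).2
  have ha : ∀ t, HasDerivAt (fun s => (x s).1) (-(α t) ^ 2 + K * ε t) t := fun t =>
    (hasFDerivAt_fst (𝕜 := ℝ)).comp_hasDerivAt t (hx t) |>.congr_deriv rfl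
  have he : ∀ t, HasDerivAt (fun s => (x s).2) (-lam * α t * ε t) t := fun t =>
    (hasFDerivAt_snd (𝕜 := ℝ)).comp_hasDerivAt t (hx t) |>.congr_deriv rfl
  have he_le : ∀ t, 0 ≤ t → (x t).2 ≤ 1 := fun t ht => by
    have := antitone_of_hasDerivAt_nonpos he
      (fun s => show -lam * α s * ε s ≤ 0 by
        nlinarith [mul_nonneg (mul_nonneg hlam (hα s).1) (hε s).1]) ht
    simpa [hx0] using this
  have hε_eq : ∀ t, 0 ≤ t → 0 ≤ (x t).2 → ε t = (x t).2 := fun t ht h0 => by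
    simp only [ε, clampBox]; rw [min_eq_left (he_le t ht), max_eq_left h0]
  -- the barrier `exp (-(λc + 1) t)` decays faster than `(x t).2` can
  have he_pos : ∀ t, 0 ≤ t → 0 < (x t).2 := by
    have hbar := image_le_of_hasDerivAt_lt_deriv_boundary_Ici (a := 0)
      (fun t _ => ((hasDerivAt_id' t).const_mul (-(lam * c + 1))).exp) (fun t _ => he t)
      (by simp [hx0]) fun t ht heq => by
        have hpos := exp_pos (-(lam * c + 1) * t)
        rw [hε_eq t ht (heq ▸ hpos.le), ← heq]
        nlinarith [mul_le_mul_of_nonneg_left (hα t).2 hlam]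
    exact fun t ht => (exp_pos _).trans_le (hbar t ht)
  have ha_nonneg := image_le_of_hasDerivAt_lt_deriv_boundary_Ici (a := 0)
    (fun t _ => hasDerivAt_const t 0) (fun t _ => ha t) (by simp [hx0, ha₀]) fun t ht heq => by
      have hαt : α t = 0 := by simp [α, clampBox, ← heq, hc]
      rw [hαt, hε_eq t ht (he_pos t ht).le]
      nlinarith [he_pos t ht]
  have ha_le := image_le_of_hasDerivAt_lt_deriv_boundary_Ici (a := 0)
    (fun t _ => ha t) (fun t _ => hasDerivAt_const t c) (by simp [hx0, hca]) fun t ht heq => by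
      have hαt : α t = c := by simp [α, clampBox, heq, hc]
      rw [hαt]
      nlinarith [(hε t).2]
  exact fun t ht => ⟨⟨⟨ha_nonneg t ht, ha_le t ht⟩, (he_pos t ht).le, he_le t ht⟩, he_pos t ht⟩

end Existence

theorem eq_exp_neg_mul_integral_of_hasDerivAt {lam : ℝ} {a e : ℝ → ℝ} (ha : Continuous a)
    (he : ∀ t, 0 ≤ t → HasDerivAt e (-lam * a t * e t) t) (hpos : ∀ t, 0 ≤ t → 0 < e t)
    (he0 : e 0 = 1) : ∀ t, 0 ≤ t → e t = exp (-lam * ∫ s in (0:ℝ)..t, a s) := fun t ht => by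
  have hlog : ∀ s ∈ uIcc 0 t, HasDerivAt (fun s => log (e s)) (-lam * a s) s := fun s hs => by
    have hs0 : 0 ≤ s := by rw [uIcc_of_le ht] at hs; exact hs.1
    convert (he s hs0).log (hpos s hs0).ne' using 1
    field_simp [(hpos s hs0).ne']
  have := integral_eq_sub_of_hasDerivAt hlog ((ha.const_mul _).intervalIntegrable 0 t)
  rw [intervalIntegral.integral_const_mul, he0, log_one, sub_zero] at this
  rw [this, exp_log (hpos t ht)]

theorem exists_continuous_solvesDeformationODE {K lam a₀ : ℝ} (hK : 0 < K) (hlam : 0 ≤ lam)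
    (ha₀ : 0 ≤ a₀) : ∃ a, Continuous a ∧ SolvesDeformationODE K lam a₀ a := by
  set c := a₀ + √K + 1
  have hca : a₀ ≤ c := by linarith [sqrt_nonneg K]
  have hcK : K < c ^ 2 := by nlinarith [sq_sqrt hK.le, sqrt_nonneg K]
  obtain ⟨L, hL⟩ := exists_lipschitzWith_deformationField_comp_clampBox (K := K) (lam := lam)
    (ha₀.trans hca)
  obtain ⟨C, hC⟩ := exists_norm_deformationField_clampBox_le (K := K) (lam := lam) (ha₀.trans hca)
  obtain ⟨x, hx0, hx⟩ := exists_hasDerivAt_of_lipschitzWith_of_norm_le hL hC (a₀, 1)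
  have hbox := mem_box_of_hasDerivAt_clampBox hK hlam ha₀ hca hcK hx0 hx
  have hx' : ∀ t, 0 ≤ t → HasDerivAt x (deformationField K lam (x t)) t := fun t ht => by
    simpa [clampBox_eq_self (hbox t ht).1] using hx t
  have hxc : Continuous x := continuous_iff_continuousAt.2 fun t => (hx t).continuousAt
  have he := eq_exp_neg_mul_integral_of_hasDerivAt (a := fun t => (x t).1) (e := fun t => (x t).2)
    (continuous_fst.comp hxc)
    (fun t ht => (hasFDerivAt_snd (𝕜 := ℝ)).comp_hasDerivAt t (hx' t ht) |>.congr_deriv rfl)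
    (fun t ht => (hbox t ht).2) (by simp [hx0])
  refine ⟨fun t => (x t).1, continuous_fst.comp hxc, by simp [hx0], fun t ht => ?_⟩
  have := (hasFDerivAt_fst (𝕜 := ℝ)).comp_hasDerivAt t (hx' t ht)
  rw [← he t ht]
  exact this

section Uniqueness

variable {K lam a₀ : ℝ} {a : ℝ → ℝ}

theorem SolvesDeformationODE.continuousOn (ha : SolvesDeformationODE K lam a₀ a) :
    ContinuousOn a (Ici 0) := fun t ht => (ha.2 t ht).continuousAt.continuousWithinAt

theorem SolvesDeformationODE.continuousOn_phasePath (ha : SolvesDeformationODE K lam a₀ a)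
    {T : ℝ} (hT : 0 ≤ T) : ContinuousOn (phasePath lam a) (Icc 0 T) := by
  have hc : ContinuousOn a (Icc 0 T) := ha.continuousOn.mono Icc_subset_Ici_self
  have hI := continuousOn_primitive_interval'
    (hc.intervalIntegrable_of_Icc (μ := MeasureTheory.volume) hT) left_mem_uIcc
  rw [uIcc_of_le hT] at hI
  exact hc.prodMk (continuousOn_const.mul hI).rexp

theorem SolvesDeformationODE.hasDerivWithinAt_phasePath (ha : SolvesDeformationODE K lam a₀ a)
    {t : ℝ} (ht : 0 ≤ t) :
    HasDerivWithinAt (phasePath lam a) (deformationField K lam (phasePath lam a t)) (Ici t) t := by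
  have hI := ((ha.continuousOn.hasDerivWithinAt_integral_Ici ht).const_mul (-lam)).exp
  refine ((ha.2 t ht).hasDerivWithinAt.prodMk hI).congr_deriv ?_
  simp only [deformationField, phasePath]
  ring_nf

theorem SolvesDeformationODE.unique {b : ℝ → ℝ} (ha : SolvesDeformationODE K lam a₀ a)
    (hb : SolvesDeformationODE K lam a₀ b) : ∀ t, 0 ≤ t → a t = b t := fun t ht =>
  congrArg Prod.fst <| ODE_solution_unique_of_contDiff contDiff_deformationField
    (ha.continuousOn_phasePath ht) (fun s hs => ha.hasDerivWithinAt_phasePath hs.1)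
    (hb.continuousOn_phasePath ht) (fun s hs => hb.hasDerivWithinAt_phasePath hs.1)
    (by simp [phasePath, ha.1, hb.1]) ⟨ht, le_rfl⟩

end Uniqueness

def SolvesDeformationSystem (K lam : ℝ) (a I : ℝ → ℝ) : Prop :=
  ∀ t, 0 ≤ t → HasDerivAt I (a t) t ∧ HasDerivAt a (-(a t) ^ 2 + K * exp (-lam * I t)) t

theorem SolvesDeformationODE.solvesDeformationSystem {K lam a₀ : ℝ} {a : ℝ → ℝ}
    (ha : SolvesDeformationODE K lam a₀ a) (hac : Continuous a) :
    SolvesDeformationSystem K lam a fun t => ∫ s in (0:ℝ)..t, a s := fun t ht =>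
  ⟨(hac.integral_hasStrictDerivAt 0 t).hasDerivAt, ha.2 t ht⟩

namespace SolvesDeformationSystem

variable {K lam : ℝ} {a I : ℝ → ℝ}

theorem hasDerivAt_mul_exp (h : SolvesDeformationSystem K lam a I) {t : ℝ} (ht : 0 ≤ t) :
    HasDerivAt (fun s => a s * exp (I s)) (K * exp ((1 - lam) * I t)) t := by
  refine ((h t ht).2.mul (h t ht).1.exp).congr_deriv ?_
  rw [show (1 - lam) * I t = -lam * I t + I t by ring, exp_add]
  ring

theorem hasDerivAt_exp (h : SolvesDeformationSystem K lam a I) {t : ℝ} (ht : 0 ≤ t) :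
    HasDerivAt (fun s => exp (I s)) (a t * exp (I t)) t :=
  (h t ht).1.exp.congr_deriv (mul_comm _ _)

theorem energy_eq (h : SolvesDeformationSystem K lam a I) (hI0 : I 0 = 0) {t : ℝ} (ht : 0 ≤ t) :
    (lam - 2) * (a t * exp (I t)) ^ 2 + 2 * K * exp ((2 - lam) * I t)
      = (lam - 2) * a 0 ^ 2 + 2 * K := by
  set W : ℝ → ℝ := fun s => (lam - 2) * (a s * exp (I s)) ^ 2 + 2 * K * exp ((2 - lam) * I s)
  have hW : ∀ s, 0 ≤ s → HasDerivAt W 0 s := fun s hs => by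
    refine ((((h.hasDerivAt_mul_exp hs).pow 2).const_mul (lam - 2)).add
      ((((h s hs).1.const_mul (2 - lam)).exp).const_mul (2 * K))).congr_deriv ?_
    rw [show (2 - lam) * I s = (1 - lam) * I s + I s by ring, exp_add]
    ring
  have := constant_of_has_deriv_right_zero (f := W)
    (fun s hs => (hW s hs.1).continuousAt.continuousWithinAt)
    (fun s hs => (hW s hs.1).hasDerivWithinAt) t ⟨ht, le_rfl⟩
  simpa [W, hI0] using this

theorem strictMonoOn_mul_exp (h : SolvesDeformationSystem K lam a I) (hK : 0 < K) :
    StrictMonoOn (fun s => a s * exp (I s)) (Ici 0) :=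
  strictMonoOn_Ici_of_hasDerivAt_pos (fun _ ht => h.hasDerivAt_mul_exp ht)
    fun _ _ => mul_pos hK (exp_pos _)

theorem nonneg (h : SolvesDeformationSystem K lam a I) (hK : 0 < K) (ha0 : 0 ≤ a 0) {t : ℝ}
    (ht : 0 ≤ t) : 0 ≤ a t := by
  have := (h.strictMonoOn_mul_exp hK).monotoneOn self_mem_Ici ht ht
  exact nonneg_of_mul_nonneg_left ((mul_nonneg ha0 (exp_pos _).le).trans this) (exp_pos _)

theorem exists_mul_one_add_le_exp (h : SolvesDeformationSystem K lam a I) (hK : 0 < K)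
    (ha0 : 0 ≤ a 0) (hI0 : I 0 = 0) : ∃ m > 0, ∀ t, 0 ≤ t → m * (1 + t) ≤ exp (I t) := by
  have hψ := h.strictMonoOn_mul_exp hK
  set δ := a 1 * exp (I 1)
  have hδ : 0 < δ := by
    have := hψ self_mem_Ici (mem_Ici.2 zero_le_one) zero_lt_one
    simp only [hI0, exp_zero, mul_one] at this
    linarith
  have hexp_ge_one : ∀ t, 0 ≤ t → 1 ≤ exp (I t) := fun t ht => by
    have := monotoneOn_Ici_of_hasDerivAt_nonneg (fun _ hs => h.hasDerivAt_exp hs)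
      (fun s hs => mul_nonneg (h.nonneg hK ha0 hs.le) (exp_pos _).le) self_mem_Ici ht ht
    simpa [hI0] using this
  have hlin : MonotoneOn (fun s => exp (I s) - δ * s) (Ici 1) :=
    monotoneOn_Ici_of_hasDerivAt_nonneg
      (fun s hs => (h.hasDerivAt_exp (zero_le_one.trans hs)).sub ((hasDerivAt_id' s).const_mul δ))
      fun s hs => by
        have := hψ.monotoneOn (mem_Ici.2 zero_le_one) (mem_Ici.2 (zero_le_one.trans hs.le)) hs.le
        simp only [mul_one]
        linarith
  refine ⟨min 1 δ / 2, by positivity, fun t ht => ?_⟩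
  have hmin := min_le_left 1 δ
  rcases le_total t 1 with ht1 | ht1
  · nlinarith [hexp_ge_one t ht]
  · have := hlin self_mem_Ici (mem_Ici.2 ht1) ht1
    simp only at this
    nlinarith [hexp_ge_one 1 zero_le_one,
      mul_nonneg (sub_nonneg.2 (min_le_right 1 δ)) (sub_nonneg.2 ht1)]

theorem exists_le_div_one_add (h : SolvesDeformationSystem K lam a I) (hK : 0 < K)
    (hlam : 2 < lam) (ha0 : 0 ≤ a 0) (hI0 : I 0 = 0) :
    ∃ C > 0, ∀ t, 0 ≤ t → a t ≤ C / (1 + t) := by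
  obtain ⟨m, hm, hgrowth⟩ := h.exists_mul_one_add_le_exp hK ha0 hI0
  set V := √(a 0 ^ 2 + 2 * K / (lam - 2))
  have hV : 0 < V :=
    sqrt_pos.2 (by have := div_pos (mul_pos two_pos hK) (sub_pos.2 hlam); positivity)
  refine ⟨V / m, div_pos hV hm, fun t ht => ?_⟩
  have hψV : a t * exp (I t) ≤ V := by
    refine (le_abs_self _).trans (abs_le_sqrt ?_)
    have hlam2 := sub_pos.2 hlam
    refine le_of_mul_le_mul_left ?_ hlam2
    rw [mul_add, mul_div_cancel₀ _ hlam2.ne', ← h.energy_eq hI0 ht]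
    nlinarith [exp_pos ((2 - lam) * I t)]
  have hat := h.nonneg hK ha0 ht
  rw [div_div, le_div_iff₀ (by positivity)]
  nlinarith [mul_le_mul_of_nonneg_left (hgrowth t ht) hat]

end SolvesDeformationSystem

/-- the ODE (5.6)/(5.7): for `K > 0`, `λ > 2`, `a₀ ≥ 0`, the problem
`a' = −a² + K exp(−λ∫₀ᵗ a)`, `a(0) = a₀` has a unique `C¹` solution on `[0,∞)`; moreover
the solution is nonnegative, bounded, and `a(t) ≤ C/(1+t)`, i.e. `a(t) = O(t^{−1})`. -/
theorem uniform_deformation_ode_global_solution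
    (K lam a₀ : ℝ) (hK : 0 < K) (hlam : 2 < lam) (ha₀ : 0 ≤ a₀) :
    ∃ a : ℝ → ℝ,
      -- existence: a C¹ solution on all of [0,∞)
      (a 0 = a₀ ∧ ∀ t : ℝ, 0 ≤ t → HasDerivAt a
        (-(a t) ^ 2 + K * Real.exp (-lam * ∫ s in (0:ℝ)..t, a s)) t) ∧
      -- uniqueness
      (∀ b : ℝ → ℝ,
        (b 0 = a₀ ∧ ∀ t : ℝ, 0 ≤ t → HasDerivAt b
          (-(b t) ^ 2 + K * Real.exp (-lam * ∫ s in (0:ℝ)..t, b s)) t) →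
        ∀ t : ℝ, 0 ≤ t → b t = a t) ∧
      -- nonnegativity
      (∀ t : ℝ, 0 ≤ t → 0 ≤ a t) ∧
      -- boundedness
      (∃ B : ℝ, ∀ t : ℝ, 0 ≤ t → |a t| ≤ B) ∧
      -- decay a(t) = O(t⁻¹)
      (∃ C > (0:ℝ), ∀ t : ℝ, 0 ≤ t → a t ≤ C / (1 + t)) := by
  obtain ⟨a, hac, ha⟩ := exists_continuous_solvesDeformationODE hK (by linarith : 0 ≤ lam) ha₀
  have hsys := ha.solvesDeformationSystem hac
  have ha0 : 0 ≤ a 0 := ha.1 ▸ ha₀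
  have hnonneg : ∀ t, 0 ≤ t → 0 ≤ a t := fun t ht => hsys.nonneg hK ha0 ht
  obtain ⟨C, hC, hdecay⟩ := hsys.exists_le_div_one_add hK hlam ha0 integral_same
  refine ⟨a, ha, fun b hb => SolvesDeformationODE.unique hb ha, hnonneg, ⟨C, fun t ht => ?_⟩,
    C, hC, hdecay⟩
  rw [abs_of_nonneg (hnonneg t ht)]
  exact (hdecay t ht).trans (div_le_self hC.le (by linarith))
end

section
/- Let n ≥ 1, γ > 1, K₁ > 0, and set λ := (γ−1)n + 2. Let a : [0,∞) → ℝ be a C¹ solution of a'(t) = −a(t)² + K₁ exp(−λ∫₀ᵗ a(s)ds), and set b(t) := exp(∫₀ᵗ a(s)ds). Let ρ₀, p₀ : [0,∞) → ℝ be C¹ radial profiles with ρ₀ ≥ 0 and p₀'(r) = −K₁ r ρ₀(r) for all r ≥ 0. Define on [0,∞) × ℝⁿ: v(t,x) := a(t)x, ρ(t,x) := b(t)^{−n} ρ₀(|x|/b(t)), p(t,x) := b(t)^{−nγ} p₀(|x|/b(t)). Then (ρ, v, p) is a classical solution of the compressible Euler system: ∂_t ρ + div_x(ρv) = 0, ρ(∂_t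 v + (v·∇_x)v) + ∇_x p = 0, and ∂_t p + (v·∇_x)p + γ p div_x v = 0, pointwise on [0,∞) × ℝⁿ. -/
/-!
The flow is self-similar: with `r = |x| / b(t)` and `b' = a b`, each term of the three equations
is a power of `b(t)` times a function of `r`, times `x` for the vector terms. In the continuity
and pressure equations the `r f'(r)` terms produced by `∂ₜ` and by `v · ∇` cancel, and what is
left vanishes because the exponents were chosen so that `-n + n = 0` and `-nγ + γn = 0`. In the
momentum equation `∂ₜv + (v · ∇)v = (a' + a²) x = K₁ b^(-λ) x`, while the compatibility condition
`p₀' = -K₁ r ρ₀` turns `∇p` into `-K₁ b^(-nγ-2) ρ₀(r) x`; the two balance since `-n - λ = -nγ - 2`.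
At the origin `ρ₀(|x| / b)` need not be differentiable, but the flux `ρ₀(|x| / b) x` is, and
`p₀'(0) = 0` makes the pressure differentiable there.
-/

open MeasureTheory Real intervalIntegral
open scoped RealInnerProductSpace

section Radial

open Asymptotics Filter Topology

variable {E : Type*} [NormedAddCommGroup E] [InnerProductSpace ℝ E]

theorem hasFDerivAt_norm {x : E} (hx : x ≠ 0) :
    HasFDerivAt (fun y : E => ‖y‖) (‖x‖⁻¹ • innerSL ℝ x) x := by
  have hsqrt : HasDerivAt Real.sqrt (1 / (2 * √(‖x‖ ^ 2))) (‖x‖ ^ 2) :=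
    Real.hasDerivAt_sqrt (by positivity)
  have hcomp := hsqrt.comp_hasFDerivAt x (hasStrictFDerivAt_norm_sq x).hasFDerivAt
  have hfun : (Real.sqrt ∘ fun y : E => ‖y‖ ^ 2) = fun y => ‖y‖ := by
    funext y; simp
  rw [hfun] at hcomp
  refine hcomp.congr_fderiv ?_
  ext y
  simp
  field_simp

theorem hasFDerivAt_comp_norm_div {h : ℝ → ℝ} {B : ℝ} {x : E} (hx : x ≠ 0)
    (hh : DifferentiableAt ℝ h (‖x‖ / B)) :
    HasFDerivAt (fun y : E => h (‖y‖ / B))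
      ((deriv h (‖x‖ / B) / (B * ‖x‖)) • innerSL ℝ x) x := by
  have hnorm := (hasFDerivAt_norm hx).mul_const B⁻¹
  refine (hh.hasDerivAt.comp_hasFDerivAt x hnorm).congr_fderiv ?_
  ext y
  simp
  field_simp

theorem hasFDerivAt_comp_norm_div_zero {h : ℝ → ℝ} (hh : HasDerivAt h 0 0) (B : ℝ) :
    HasFDerivAt (fun y : E => h (‖y‖ / B)) (0 : E →L[ℝ] ℝ) 0 := by
  rw [hasFDerivAt_iff_isLittleO_nhds_zero (x := (0 : E))]
  have hlin : (fun y : E => ‖y‖ / B) =O[𝓝 0] fun y => y := by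
    simpa [div_eq_inv_mul] using
      (isBigO_refl (fun y : E => y) (𝓝 0)).norm_left.const_mul_left B⁻¹
  have htends : Tendsto (fun y : E => ‖y‖ / B) (𝓝 0) (𝓝 0) := by
    simpa using ((continuous_norm.div_const B).tendsto (0 : E))
  have := ((hasDerivAt_iff_isLittleO_nhds_zero.1 hh).comp_tendsto htends).trans_isBigO hlin
  simpa [Function.comp_def] using this

theorem hasFDerivAt_comp_norm_div_of_deriv_eq_mul {h k : ℝ → ℝ} (hh : Differentiable ℝ h)
    (hk : ∀ s, 0 ≤ s → deriv h s = s * k s) {B : ℝ} (hB : 0 < B) (x : E) :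
    HasFDerivAt (fun y : E => h (‖y‖ / B)) ((k (‖x‖ / B) / B ^ 2) • innerSL ℝ x) x := by
  rcases eq_or_ne x 0 with rfl | hx
  · have h0 : HasDerivAt h 0 0 := by simpa [hk 0 le_rfl] using (hh 0).hasDerivAt
    simpa using hasFDerivAt_comp_norm_div_zero h0 B
  · convert hasFDerivAt_comp_norm_div hx (hh _) using 2
    rw [hk _ (by positivity)]
    field_simp

theorem hasFDerivAt_smul_self_zero {g : E → ℝ} (hg : ContinuousAt g 0) :
    HasFDerivAt (fun y => g y • y) (g 0 • ContinuousLinearMap.id ℝ E) 0 := by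
  rw [hasFDerivAt_iff_isLittleO_nhds_zero]
  have hsmall : (fun y => g y - g 0) =o[𝓝 (0 : E)] fun _ => (1 : ℝ) :=
    (isLittleO_one_iff ℝ).2 (by simpa using hg.sub_const (g 0))
  simpa [sub_smul] using hsmall.smul_isBigO (isBigO_refl (fun y : E => y) _)

theorem hasFDerivAt_comp_norm_div_smul_self {h : ℝ → ℝ} (hh : Differentiable ℝ h) (B : ℝ)
    (x : E) :
    HasFDerivAt (fun y : E => h (‖y‖ / B) • y)
      (h (‖x‖ / B) • ContinuousLinearMap.id ℝ E
        + ((deriv h (‖x‖ / B) / (B * ‖x‖)) • innerSL ℝ x).smulRight x) x := by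
  rcases eq_or_ne x 0 with rfl | hx
  · simpa using hasFDerivAt_smul_self_zero
      ((hh.continuous.comp (continuous_norm.div_const B)).continuousAt (x := (0 : E)))
  · exact (hasFDerivAt_comp_norm_div hx (hh _)).fun_smul (hasFDerivAt_id x)

end Radial

section PartialDerivatives

variable {n : ℕ} {q : ℝ × EuclideanSpace ℝ (Fin n)}

theorem pdT_eq_of_hasDerivAt {f : ℝ × EuclideanSpace ℝ (Fin n) → ℝ} {f' : ℝ}
    (h : HasDerivAt (fun s => f (s, q.2)) f' q.1) : pdT f q = f' :=
  h.deriv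

theorem pdX_eq_of_hasFDerivAt {f : ℝ × EuclideanSpace ℝ (Fin n) → ℝ}
    {L : EuclideanSpace ℝ (Fin n) →L[ℝ] ℝ} (h : HasFDerivAt (fun y => f (q.1, y)) L q.2)
    (i : Fin n) : pdX f i q = L (EuclideanSpace.single i 1) := by
  rw [pdX, h.fderiv]

theorem pdX_apply_eq_of_hasFDerivAt
    {w : ℝ × EuclideanSpace ℝ (Fin n) → EuclideanSpace ℝ (Fin n)}
    {L : EuclideanSpace ℝ (Fin n) →L[ℝ] EuclideanSpace ℝ (Fin n)}
    (h : HasFDerivAt (fun y => w (q.1, y)) L q.2) (i j : Fin n) :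
    pdX (fun z => w z i) j q = L (EuclideanSpace.single j 1) i :=
  pdX_eq_of_hasFDerivAt (f := fun z => w z i)
    ((EuclideanSpace.proj (𝕜 := ℝ) i).hasFDerivAt.comp q.2 h) j

theorem divX_eq_of_hasFDerivAt
    {w : ℝ × EuclideanSpace ℝ (Fin n) → EuclideanSpace ℝ (Fin n)}
    {L : EuclideanSpace ℝ (Fin n) →L[ℝ] EuclideanSpace ℝ (Fin n)}
    (h : HasFDerivAt (fun y => w (q.1, y)) L q.2) :
    divX w q = ∑ i, L (EuclideanSpace.single i 1) i :=
  Finset.sum_congr rfl fun i _ => pdX_apply_eq_of_hasFDerivAt h i i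

theorem sum_smul_id_add_smulRight_apply_single (c k : ℝ) (x : EuclideanSpace ℝ (Fin n)) :
    ∑ i, (c • ContinuousLinearMap.id ℝ (EuclideanSpace ℝ (Fin n))
      + (k • innerSL ℝ x).smulRight x) (EuclideanSpace.single i 1) i = n * c + k * ‖x‖ ^ 2 := by
  simp [EuclideanSpace.inner_single_right, Finset.sum_add_distrib, mul_assoc, ← Finset.mul_sum,
    ← sq, EuclideanSpace.real_norm_sq_eq]

end PartialDerivatives

theorem hasDerivAt_rpow_mul_comp_div {b f : ℝ → ℝ} {α t c R : ℝ}
    (hb : HasDerivAt b (α * b t) t) (hbt : b t ≠ 0) (hf : DifferentiableAt ℝ f (R / b t)) :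
    HasDerivAt (fun s => b s ^ c * f (R / b s))
      (α * b t ^ c * (c * f (R / b t) - R / b t * deriv f (R / b t))) t := by
  have hpow : HasDerivAt (fun s => b s ^ c) (c * α * b t ^ c) t := by
    refine (hb.rpow_const (p := c) (Or.inl hbt)).congr_deriv ?_
    rw [Real.rpow_sub_one hbt]
    linear_combination (c * α) * mul_div_cancel₀ (b t ^ c) hbt
  have hquot : HasDerivAt (fun s => R / b s) (-(R / b t) * α) t :=
    ((hb.inv hbt).const_mul R).congr_deriv (by field_simp)
  refine (hpow.fun_mul (hf.hasDerivAt.comp t hquot)).congr_deriv ?_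
  simp only [Function.comp_apply]
  ring

noncomputable def selfSimilar {n : ℕ} (b : ℝ → ℝ) (κ : ℝ) (f : ℝ → ℝ) :
    ℝ × EuclideanSpace ℝ (Fin n) → ℝ :=
  fun q => b q.1 ^ κ * f (‖q.2‖ / b q.1)

noncomputable def linearField {n : ℕ} (a : ℝ → ℝ) :
    ℝ × EuclideanSpace ℝ (Fin n) → EuclideanSpace ℝ (Fin n) :=
  fun q => a q.1 • q.2

section UniformDeformation

variable {n : ℕ} {a b f : ℝ → ℝ} {κ t : ℝ} {x : EuclideanSpace ℝ (Fin n)}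

theorem pdT_selfSimilar (hb : HasDerivAt b (a t * b t) t) (hbt : b t ≠ 0)
    (hf : DifferentiableAt ℝ f (‖x‖ / b t)) :
    pdT (selfSimilar b κ f) (t, x)
      = a t * b t ^ κ * (κ * f (‖x‖ / b t) - ‖x‖ / b t * deriv f (‖x‖ / b t)) :=
  pdT_eq_of_hasDerivAt (hasDerivAt_rpow_mul_comp_div hb hbt hf)

theorem pdX_selfSimilar_of_deriv_eq_mul {k : ℝ → ℝ} (hf : Differentiable ℝ f)
    (hk : ∀ s, 0 ≤ s → deriv f s = s * k s) (hbt : 0 < b t) (i : Fin n) :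
    pdX (selfSimilar b κ f) i (t, x) = b t ^ κ * (k (‖x‖ / b t) / b t ^ 2) * x i := by
  rw [pdX_eq_of_hasFDerivAt
    ((hasFDerivAt_comp_norm_div_of_deriv_eq_mul hf hk hbt x).const_mul (b t ^ κ))]
  simp [EuclideanSpace.inner_single_right]
  ring

theorem sum_linearField_mul_pdX_selfSimilar_of_deriv_eq_mul {k : ℝ → ℝ}
    (hf : Differentiable ℝ f) (hk : ∀ s, 0 ≤ s → deriv f s = s * k s) (hbt : 0 < b t) :
    ∑ i, linearField a (t, x) i * pdX (selfSimilar b κ f) i (t, x)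
      = a t * b t ^ κ * (k (‖x‖ / b t) / b t ^ 2) * ‖x‖ ^ 2 := by
  simp_rw [pdX_selfSimilar_of_deriv_eq_mul hf hk hbt, EuclideanSpace.real_norm_sq_eq,
    Finset.mul_sum]
  refine Finset.sum_congr rfl fun i _ => ?_
  simp only [linearField, PiLp.smul_apply, smul_eq_mul]
  ring

theorem pdT_linearField_apply {a' : ℝ} (ha : HasDerivAt a a' t) (i : Fin n) :
    pdT (fun z => linearField a z i) (t, x) = a' * x i :=
  pdT_eq_of_hasDerivAt (ha.mul_const (x i))

theorem hasFDerivAt_linearField :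
    HasFDerivAt (fun y => linearField a (t, y)) (a t • ContinuousLinearMap.id ℝ _) x :=
  (hasFDerivAt_id x).const_smul (a t)

theorem sum_linearField_mul_pdX_linearField (i : Fin n) :
    ∑ j, linearField a (t, x) j * pdX (fun z => linearField a z i) j (t, x) = a t ^ 2 * x i := by
  simp_rw [pdX_apply_eq_of_hasFDerivAt (q := (t, x)) hasFDerivAt_linearField i]
  simp [linearField, PiLp.single_apply]
  ring

theorem divX_linearField : divX (linearField a) (t, x) = n * a t := by
  simp [divX_eq_of_hasFDerivAt (q := (t, x)) hasFDerivAt_linearField]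

theorem divX_selfSimilar_smul_linearField (hf : Differentiable ℝ f) :
    divX (fun z => selfSimilar b κ f z • linearField a z) (t, x)
      = a t * b t ^ κ * (n * f (‖x‖ / b t) + ‖x‖ / b t * deriv f (‖x‖ / b t)) := by
  set g : ℝ → ℝ := fun s => a t * b t ^ κ * f s
  have hflux : (fun y : EuclideanSpace ℝ (Fin n) => selfSimilar b κ f (t, y) • linearField a (t, y))
      = fun y => g (‖y‖ / b t) • y := by
    funext y
    simp only [selfSimilar, linearField, smul_smul, g]
    ring_nf
  rw [divX_eq_of_hasFDerivAt (q := (t, x))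
    (hflux ▸ hasFDerivAt_comp_norm_div_smul_self (hf.const_mul _) (b t) x),
    sum_smul_id_add_smulRight_apply_single, deriv_const_mul_field']
  rcases eq_or_ne ‖x‖ 0 with hx | hx
  · simp [hx]
    ring
  · field_simp

end UniformDeformation

theorem uniform_deformation_solves_euler_general
    (n : ℕ) (γ K₁ lam : ℝ)
    (hlam : lam = (γ - 1) * n + 2)
    (a b : ℝ → ℝ) (ha_cont : Continuous a)
    (ha : ∀ t : ℝ, 0 ≤ t → HasDerivAt a
      (-(a t) ^ 2 + K₁ * Real.exp (-lam * ∫ s in (0:ℝ)..t, a s)) t)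
    (hb : ∀ t : ℝ, b t = Real.exp (∫ s in (0:ℝ)..t, a s))
    (ρ₀ p₀ : ℝ → ℝ) (hρ₀ : ContDiff ℝ 1 ρ₀) (hp₀ : ContDiff ℝ 1 p₀)
    (hcompat : ∀ r : ℝ, 0 ≤ r → deriv p₀ r = -K₁ * r * ρ₀ r)
    (ρ p : ℝ × EuclideanSpace ℝ (Fin n) → ℝ)
    (v : ℝ × EuclideanSpace ℝ (Fin n) → EuclideanSpace ℝ (Fin n))
    (hvdef : ∀ q : ℝ × EuclideanSpace ℝ (Fin n), v q = a q.1 • q.2)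
    (hρdef : ∀ q : ℝ × EuclideanSpace ℝ (Fin n),
      ρ q = b q.1 ^ (-(n:ℝ)) * ρ₀ (‖q.2‖ / b q.1))
    (hpdef : ∀ q : ℝ × EuclideanSpace ℝ (Fin n),
      p q = b q.1 ^ (-(n:ℝ) * γ) * p₀ (‖q.2‖ / b q.1)) :
    ∀ q : ℝ × EuclideanSpace ℝ (Fin n), 0 ≤ q.1 →
      -- continuity equation
      (pdT ρ q + divX (fun z => ρ z • v z) q = 0) ∧
      -- momentum equations
      (∀ i, ρ q * (pdT (fun z => v z i) q + ∑ j, v q j * pdX (fun z => v z i) j q)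
        + pdX p i q = 0) ∧
      -- pressure equation
      (pdT p q + (∑ i, v q i * pdX p i q) + γ * p q * divX v q = 0) := by
  obtain rfl : v = linearField a := funext hvdef
  obtain rfl : ρ = selfSimilar b (-(n:ℝ)) ρ₀ := funext hρdef
  obtain rfl : p = selfSimilar b (-(n:ℝ) * γ) p₀ := funext hpdef
  have hρ₀' := hρ₀.differentiable one_ne_zero
  have hp₀' := hp₀.differentiable one_ne_zero
  have hp₀_deriv (s : ℝ) (hs : 0 ≤ s) : deriv p₀ s = s * (-K₁ * ρ₀ s) := by
    rw [hcompat s hs]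
    ring
  rintro ⟨t, x⟩ (ht : 0 ≤ t)
  have hb' : HasDerivAt b (a t * b t) t := by
    rw [funext hb]
    simpa [mul_comm] using (ha_cont.integral_hasStrictDerivAt 0 t).hasDerivAt.exp
  have hB : 0 < b t := hb t ▸ exp_pos _
  have hBlam : Real.exp (-lam * ∫ s in (0:ℝ)..t, a s) = b t ^ (-lam) := by
    rw [hb, ← Real.exp_mul, mul_comm]
  have hBpow : b t ^ (-(n:ℝ) * γ) = b t ^ (-(n:ℝ)) * b t ^ (-lam) * b t ^ 2 := by
    rw [← Real.rpow_natCast, ← Real.rpow_add hB, ← Real.rpow_add hB, hlam]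
    ring_nf
  refine ⟨?_, fun i => ?_, ?_⟩
  · rw [pdT_selfSimilar hb' hB.ne' (hρ₀' _), divX_selfSimilar_smul_linearField hρ₀']
    ring
  · rw [pdT_linearField_apply (ha t ht), sum_linearField_mul_pdX_linearField,
      pdX_selfSimilar_of_deriv_eq_mul hp₀' hp₀_deriv hB, hBlam, hBpow]
    simp only [selfSimilar]
    field_simp
    ring
  · rw [pdT_selfSimilar hb' hB.ne' (hp₀' _), divX_linearField,
      sum_linearField_mul_pdX_selfSimilar_of_deriv_eq_mul hp₀' hp₀_deriv hB,
      hp₀_deriv _ (by positivity)]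
    simp only [selfSimilar]
    field_simp
    ring

/-- Section 5.1, motion with uniform deformation: if `a` solves the ODE
`a' = −a² + K₁exp(−λ∫₀ᵗa)` with `λ = (γ−1)n+2`, `b = exp(∫₀ᵗa)`, and the radial profiles
satisfy the compatibility condition `p₀' = −K₁ r ρ₀`, then `v = a(t)x`,
`ρ = b^{−n}ρ₀(|x|/b)`, `p = b^{−nγ}p₀(|x|/b)` is a classical solution of the compressible
Euler system on `[0,∞) × ℝⁿ`. -/
theorem uniform_deformation_solves_euler
    (n : ℕ) (hn : 1 ≤ n) (γ K₁ lam : ℝ) (hγ : 1 < γ) (hK₁ : 0 < K₁)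
    (hlam : lam = (γ - 1) * n + 2)
    (a b : ℝ → ℝ) (ha_cont : Continuous a)
    (ha : ∀ t : ℝ, 0 ≤ t → HasDerivAt a
      (-(a t) ^ 2 + K₁ * Real.exp (-lam * ∫ s in (0:ℝ)..t, a s)) t)
    (hb : ∀ t : ℝ, b t = Real.exp (∫ s in (0:ℝ)..t, a s))
    (ρ₀ p₀ : ℝ → ℝ) (hρ₀ : ContDiff ℝ 1 ρ₀) (hp₀ : ContDiff ℝ 1 p₀)
    (hρ₀nonneg : ∀ r : ℝ, 0 ≤ r → 0 ≤ ρ₀ r)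
    (hcompat : ∀ r : ℝ, 0 ≤ r → deriv p₀ r = -K₁ * r * ρ₀ r)
    (ρ p : ℝ × EuclideanSpace ℝ (Fin n) → ℝ)
    (v : ℝ × EuclideanSpace ℝ (Fin n) → EuclideanSpace ℝ (Fin n))
    (hvdef : ∀ q : ℝ × EuclideanSpace ℝ (Fin n), v q = a q.1 • q.2)
    (hρdef : ∀ q : ℝ × EuclideanSpace ℝ (Fin n),
      ρ q = b q.1 ^ (-(n:ℝ)) * ρ₀ (‖q.2‖ / b q.1))
    (hpdef : ∀ q : ℝ × EuclideanSpace ℝ (Fin n),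
      p q = b q.1 ^ (-(n:ℝ) * γ) * p₀ (‖q.2‖ / b q.1)) :
    ∀ q : ℝ × EuclideanSpace ℝ (Fin n), 0 ≤ q.1 →
      -- continuity equation
      (pdT ρ q + divX (fun z => ρ z • v z) q = 0) ∧
      -- momentum equations
      (∀ i, ρ q * (pdT (fun z => v z i) q + ∑ j, v q j * pdX (fun z => v z i) j q)
        + pdX p i q = 0) ∧
      -- pressure equation
      (pdT p q + (∑ i, v q i * pdX p i q) + γ * p q * divX v q = 0) :=
  uniform_deformation_solves_euler_general n γ K₁ lam hlam a b ha_cont ha hb ρ₀ p₀ hρ₀ hp₀ hcompat ρ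
    p v hvdef hρdef hpdef
end
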